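/- arXiv:0807.5017 — 9 statements merged into one kernel-verified Lean document; each statement's English description precedes it below -/
import Mathlib

section
/- Let R be a ring with involution *. If every normal element of R (element commuting with its image under *) is central, and R is a central simple algebra, then R is commutative (a field). -/
/-- An involution on a ring: an additive, anti-multiplicative map of order at most 2. -/
def IsInvolution {R : Type*} [Ring R] (τ : R → R) : Prop :=
  (∀ a b : R, τ (a + b) = τ a + τ b) ∧ (∀ a b : R, τ (a * b) = τ b * τ a) ∧
    (∀ a : R, τ (τ a) = a)

section

variable {R : Type*} [Ring R]

theorem commute_of_add_mem_center {a b : R} (h : a + b ∈ Set.center R) : Commute a b := by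
  have hb : b = (a + b) - a := (add_sub_cancel_left a b).symm
  have hs : a * (a + b) = (a + b) * a := ((Set.mem_center_iff.mp h).comm a).symm
  rw [Commute, SemiconjBy, hb, mul_sub, sub_mul, hs]

/-- The symmetric element `a + τ a` is normal, hence central; so `a` commutes with
`τ a = (a + τ a) - a`, i.e. `a` is normal, hence central. -/
theorem mem_center_of_normal_mem_center {τ : R → R}
    (hadd : ∀ a b : R, τ (a + b) = τ a + τ b) (hinv : ∀ a : R, τ (τ a) = a)
    (hnormal : ∀ a : R, a * τ a = τ a * a → a ∈ Set.center R) (a : R) :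
    a ∈ Set.center R := by
  have hsym : τ (a + τ a) = a + τ a := by rw [hadd, hinv, add_comm]
  have hcentral : a + τ a ∈ Set.center R := hnormal _ (by rw [hsym])
  exact hnormal a (commute_of_add_mem_center hcentral).eq

end

theorem stmt_0_general (R : Type*) [Ring R]
    (τ : R → R) (hτ : IsInvolution τ)
    (hnormal : ∀ a : R, a * τ a = τ a * a → a ∈ Set.center R) :
    ∀ x y : R, x * y = y * x := by
  obtain ⟨hadd, -, hinv⟩ := hτ
  intro x y
  exact (Set.mem_center_iff.mp (mem_center_of_normal_mem_center hadd hinv hnormal x)).comm y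

/-- A central simple algebra with involution in which every normal element
(i.e. every element commuting with its image under the involution) is central
is commutative (hence a field). -/
theorem stmt_0 (F R : Type*) [Field F] [Ring R] [Algebra F R]
    [Algebra.IsCentral F R] [IsSimpleRing R]
    (τ : R → R) (hτ : IsInvolution τ)
    (hnormal : ∀ a : R, a * τ a = τ a * a → a ∈ Set.center R) :
    ∀ x y : R, x * y = y * x :=
  stmt_0_general R τ hτ hnormal
end

section
/- Every finite extension K/F of fields of characteristic zero equipped with an involution * (with F *-invariant) is generated over F by a single element that is either symmetric (θ* = θ) or antisymmetric (θ* = -θ). -/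
/-!
Take a primitive element `α` of `K/F`. If `α` is not symmetric, split it as `2α = s + a` with
`s = α + α*` symmetric and `a = α - α*` antisymmetric and nonzero. Then `s a` and `a` are both
antisymmetric, hence so is `θₙ = s a + n a` for every natural number `n`. Since `K/F` is separable
it has only finitely many intermediate fields, so `F(θₙ) = F(θₘ)` for some `n ≠ m`; this field
contains `a`, `s a`, hence `s` and `α`, so it is all of `K`.
-/

open IntermediateField

def IsInvolution.toRingEquiv {R : Type*} [CommRing R] {τ : R → R} (hτ : IsInvolution τ) :
    R ≃+* R where
  toEquiv := Function.Involutive.toPerm τ hτ.2.2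
  map_mul' a b := (hτ.2.1 a b).trans (mul_comm _ _)
  map_add' := hτ.1

theorem IntermediateField.exists_natCast_mem_adjoin_add_mul {F K : Type*} [Field F] [Field K]
    [Algebra F K] [CharZero K] [Finite (IntermediateField F K)] (x y : K) :
    ∃ n : ℕ, x ∈ F⟮x + n * y⟯ ∧ y ∈ F⟮x + n * y⟯ := by
  obtain ⟨n, m, hnm, heq⟩ :=
    Finite.exists_ne_map_eq_of_infinite fun n : ℕ ↦ F⟮x + n * y⟯
  set E := F⟮x + n * y⟯
  have hn : x + n * y ∈ E := mem_adjoin_simple_self F _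
  have hm : x + m * y ∈ E := heq ▸ mem_adjoin_simple_self F _
  have hy : y ∈ E := by
    have hsub : ((n : K) - m) ≠ 0 := sub_ne_zero.mpr (Nat.cast_injective.ne hnm)
    have hdiff : ((n : K) - m) * y ∈ E := by
      convert sub_mem hn hm using 1
      ring
    simpa [hsub] using mul_mem (inv_mem (sub_mem (natCast_mem E n) (natCast_mem E m))) hdiff
  refine ⟨n, ?_, hy⟩
  simpa using sub_mem hn (mul_mem (natCast_mem E n) hy)

theorem exists_adjoin_simple_eq_top_of_involutive {F K : Type*} [Field F] [Field K]
    [Algebra F K] [FiniteDimensional F K] [CharZero K] (σ : K ≃+* K)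
    (hσ : Function.Involutive σ) : ∃ θ : K, (σ θ = θ ∨ σ θ = -θ) ∧ F⟮θ⟯ = ⊤ := by
  have : CharZero F := (algebraMap F K).charZero
  obtain ⟨α, hα⟩ := Field.exists_primitive_element F K
  by_cases hfix : σ α = α
  · exact ⟨α, .inl hfix, hα⟩
  have : Finite (IntermediateField F K) :=
    Field.finite_intermediateField_of_exists_primitive_element F K ⟨α, hα⟩
  set s := α + σ α
  set a := α - σ α
  have hs : σ s = s := by simp [s, hσ _, add_comm]
  have ha : σ a = -a := by simp [a, hσ _]
  have ha0 : a ≠ 0 := sub_ne_zero.mpr (Ne.symm hfix)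
  obtain ⟨n, hsaE, haE⟩ := exists_natCast_mem_adjoin_add_mul (F := F) (s * a) a
  refine ⟨s * a + n * a, .inr ?_, ?_⟩
  · simp only [map_add, map_mul, map_natCast, hs, ha]
    ring
  · have hsE : s ∈ F⟮s * a + n * a⟯ := by
      simpa [ha0] using div_mem hsaE haE
    have hαE : α ∈ F⟮s * a + n * a⟯ := by
      have h2α : α = (s + a) / 2 := by simp only [s, a]; ring
      rw [h2α]
      exact div_mem (add_mem hsE haE) (ofNat_mem _ 2)
    rw [eq_top_iff, ← hα]
    exact adjoin_simple_le_iff.mpr hαE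

theorem stmt_1_general (F K : Type*) [Field F] [Field K] [Algebra F K]
    [FiniteDimensional F K] [CharZero K]
    (τ : K → K) (hτ : IsInvolution τ) :
    ∃ θ : K, (τ θ = θ ∨ τ θ = -θ) ∧ Algebra.adjoin F {θ} = ⊤ := by
  obtain ⟨θ, hθ, htop⟩ := exists_adjoin_simple_eq_top_of_involutive (F := F) hτ.toRingEquiv hτ.2.2
  exact ⟨θ, hθ, Algebra.adjoin_eq_top_of_primitive_element (.of_finite F θ) htop⟩

/-- Every finite extension `K/F` of fields of characteristic zero with involution `τ`
(with `F` τ-invariant) is generated over `F` by a single symmetric or antisymmetric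
element. -/
theorem stmt_1 (F K : Type*) [Field F] [Field K] [Algebra F K]
    [FiniteDimensional F K] [CharZero K]
    (τ : K → K) (hτ : IsInvolution τ)
    (hF : ∀ a : F, τ (algebraMap F K a) ∈ (algebraMap F K).range) :
    ∃ θ : K, (τ θ = θ ∨ τ θ = -θ) ∧ Algebra.adjoin F {θ} = ⊤ :=
  stmt_1_general F K τ hτ
end

section
/- If K/F is a finite extension of fields with involution * of characteristic zero and F is not fixed pointwise by * (F ≠ sym(F)), then K is generated over F by a symmetric element. -/
namespace IsInvolution

variable {R : Type*} {τ : R → R}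

theorem map_one [Ring R] (hτ : IsInvolution τ) : τ 1 = 1 :=
  calc τ 1 = τ 1 * τ (τ 1) := by rw [hτ.2.2, mul_one]
    _ = 1 := by rw [← hτ.2.1, mul_one, hτ.2.2]

def toRingHom [CommRing R] (hτ : IsInvolution τ) : R →+* R :=
  { AddMonoidHom.mk' τ hτ.1 with
    map_one' := hτ.map_one
    map_mul' := fun a b ↦ show τ (a * b) = τ a * τ b by rw [hτ.2.1, mul_comm] }

end IsInvolution

namespace IntermediateField

variable {F K : Type*} [Field F] [Field K] [Algebra F K]

theorem exists_natCast_mem_adjoin_simple [CharZero K] [Finite (IntermediateField F K)]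
    (x y : K) : ∃ n : ℕ, x ∈ F⟮x + n * y⟯ ∧ y ∈ F⟮x + n * y⟯ := by
  obtain ⟨m, n, hmn, heq⟩ :=
    Finite.exists_ne_map_eq_of_infinite fun n : ℕ ↦ F⟮x + n * y⟯
  set L := F⟮x + n * y⟯
  have hm : x + m * y ∈ L := heq ▸ mem_adjoin_simple_self F _
  have hn : x + n * y ∈ L := mem_adjoin_simple_self F _
  have hmn' : (m - n : K) ≠ 0 := sub_ne_zero.mpr (Nat.cast_injective.ne hmn)
  have hy : y ∈ L := by
    have : y = (m - n : K)⁻¹ * ((x + m * y) - (x + n * y)) := by field_simp; ring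
    rw [this]
    exact mul_mem (inv_mem (sub_mem (natCast_mem L m) (natCast_mem L n))) (sub_mem hm hn)
  refine ⟨n, ?_, hy⟩
  simpa using sub_mem hn (mul_mem (natCast_mem L n) hy)

end IntermediateField

theorem mem_of_add_map_mem_of_mul_add_map_mem {K S : Type*} [Field K] [SetLike S K]
    [SubfieldClass S K] {L : S} (σ : K →+* K) {x c : K} (hc : c ∈ L) (hσc : σ c ∈ L)
    (hne : σ c ≠ c) (hx : x + σ x ∈ L) (hcx : c * x + σ (c * x) ∈ L) : x ∈ L := by
  have key : x = (c - σ c)⁻¹ * ((c * x + σ (c * x)) - σ c * (x + σ x)) := by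
    rw [map_mul, eq_inv_mul_iff_mul_eq₀ (sub_ne_zero.mpr hne.symm)]
    ring
  rw [key]
  exact mul_mem (inv_mem (sub_mem hc hσc)) (sub_mem hcx (mul_mem hσc hx))

open IntermediateField in
/-- If `K/F` is a finite extension of fields of characteristic zero with involution `τ`,
`F` is τ-invariant, and `F` is not fixed pointwise by `τ`, then `K` is generated over `F`
by a symmetric element. -/
theorem stmt_2 (F K : Type*) [Field F] [Field K] [Algebra F K]
    [FiniteDimensional F K] [CharZero K]
    (τ : K → K) (hτ : IsInvolution τ)
    (hF : ∀ a : F, τ (algebraMap F K a) ∈ (algebraMap F K).range)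
    (hne : ∃ a : F, τ (algebraMap F K a) ≠ algebraMap F K a) :
    ∃ θ : K, τ θ = θ ∧ Algebra.adjoin F {θ} = ⊤ := by
  set σ := hτ.toRingHom
  have hσσ (x : K) : σ (σ x) = x := hτ.2.2 x
  obtain ⟨a, ha⟩ := hne
  set c := algebraMap F K a
  obtain ⟨b, hb⟩ : ∃ b, algebraMap F K b = σ c := hF a
  have : CharZero F := (algebraMap F K).charZero
  obtain ⟨α, hα⟩ := Field.exists_primitive_element F K
  have : Finite (IntermediateField F K) :=
    Field.finite_intermediateField_of_exists_primitive_element F K ⟨α, hα⟩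
  obtain ⟨n, hs, ht⟩ := exists_natCast_mem_adjoin_simple (F := F) (c * α + σ (c * α)) (α + σ α)
  set θ := c * α + σ (c * α) + n * (α + σ α)
  have hαθ : α ∈ F⟮θ⟯ :=
    mem_of_add_map_mem_of_mul_add_map_mem σ (F⟮θ⟯.algebraMap_mem a)
      (hb ▸ F⟮θ⟯.algebraMap_mem b) ha ht hs
  refine ⟨θ, ?_, Algebra.adjoin_eq_top_of_primitive_element (.of_finite F θ) ?_⟩
  · change σ θ = θ
    simp only [θ, map_add, map_mul, map_natCast, hσσ]
    ring
  · exact top_unique (hα ▸ adjoin_simple_le_iff.mpr hαθ)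
end

section
/- Let D be a field of characteristic 2 (more generally, let ε = -1 and the involution on D be the identity, so D is commutative). Then the only (-1)-hermitian cone on M_n(D) with the transpose involution is {0}. -/
/-!
Every element `A` of the cone is skew. Conjugating by the matrix unit `E_kk` gives `A_kk E_kk`,
which is its own negative; conjugating by `E_kk + E_ll` and by `E_kl + E_lk` (`k ≠ l`) gives the
`{k, l}` block of `A` and its negative once the diagonal is known to vanish. As the cone contains
no `B ≠ 0` together with `-B`, every entry of `A` is zero.
-/

open Matrix

theorem eq_zero_of_mem_of_neg_mem {G : Type*} [InvolutiveNeg G] [Zero G] {M : Set G}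
    (hM : M ∩ -M = {0}) {A : G} (hA : A ∈ M) (hnA : -A ∈ M) : A = 0 := by
  have : A ∈ M ∩ -M := ⟨hA, hnA⟩
  rwa [hM] at this

namespace Matrix

variable {ι R : Type*} [Fintype ι] [DecidableEq ι] [Ring R]

theorem single_add_single_mul_mul_transpose (i j k l : ι) (A : Matrix ι ι R) :
    (single i j 1 + single k l 1) * A * (single i j 1 + single k l 1)ᵀ =
      single i i (A j j) + single i k (A j l) + single k i (A l j) + single k k (A l l) := by
  simp only [transpose_add, transpose_single, add_mul, mul_add, single_mul_mul_single,
    one_mul, mul_one]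
  abel

variable {M : Set (Matrix ι ι R)} {A : Matrix ι ι R}

theorem apply_self_eq_zero_of_mem_of_skew_cone (hskew : ∀ A ∈ M, -Aᵀ = A)
    (hcong : ∀ P : Matrix ι ι R, ∀ A ∈ M, P * A * Pᵀ ∈ M) (hproper : M ∩ -M = {0})
    (hA : A ∈ M) (k : ι) : A k k = 0 := by
  have hmem : single k k (A k k) ∈ M := by
    simpa using hcong (single k k 1) A hA
  have hneg : A k k = -A k k := by
    simpa using congrFun (congrFun (hskew A hA) k) k |>.symm
  have hnmem : -single k k (A k k) ∈ M := by
    rwa [single_neg, ← hneg]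
  simpa using congrFun (congrFun (eq_zero_of_mem_of_neg_mem hproper hmem hnmem) k) k

theorem apply_eq_zero_of_mem_of_skew_cone (hskew : ∀ A ∈ M, -Aᵀ = A)
    (hcong : ∀ P : Matrix ι ι R, ∀ A ∈ M, P * A * Pᵀ ∈ M) (hproper : M ∩ -M = {0})
    (hA : A ∈ M) {k l : ι} (hkl : k ≠ l) : A k l = 0 := by
  have hdiag := apply_self_eq_zero_of_mem_of_skew_cone hskew hcong hproper hA
  have hlk : A l k = -A k l := by
    simpa using congrFun (congrFun (hskew A hA) l) k |>.symm
  set B := single k l (A k l) + single l k (-A k l)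
  have hB : B ∈ M := by
    have := hcong (single k k 1 + single l l 1) A hA
    rw [single_add_single_mul_mul_transpose, hdiag, hdiag, hlk] at this
    simpa [B] using this
  have hnB : -B ∈ M := by
    have := hcong (single k l 1 + single l k 1) A hA
    rw [single_add_single_mul_mul_transpose, hdiag, hdiag, hlk] at this
    simpa [B, single_neg, add_comm] using this
  simpa [B, single_apply_of_ne, hkl.symm] using
    congrFun (congrFun (eq_zero_of_mem_of_neg_mem hproper hB hnB) k) l

theorem eq_zero_of_mem_of_skew_cone (hskew : ∀ A ∈ M, -Aᵀ = A)
    (hcong : ∀ P : Matrix ι ι R, ∀ A ∈ M, P * A * Pᵀ ∈ M) (hproper : M ∩ -M = {0})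
    (hA : A ∈ M) : A = 0 := by
  ext k l
  rcases eq_or_ne k l with rfl | hkl
  · exact apply_self_eq_zero_of_mem_of_skew_cone hskew hcong hproper hA k
  · exact apply_eq_zero_of_mem_of_skew_cone hskew hcong hproper hA hkl

end Matrix

theorem stmt_4_general {D : Type*} [Field D] (n : ℕ)
    (M : Set (Matrix (Fin n) (Fin n) D))
    (hherm : ∀ A ∈ M, -Aᵀ = A)
    (hcong : ∀ P : Matrix (Fin n) (Fin n) D, ∀ A ∈ M, P * A * Pᵀ ∈ M)
    (hproper : M ∩ (-M) = {0}) :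
    M = {0} := by
  refine Set.eq_singleton_iff_unique_mem.2 ⟨?_, fun A hA => ?_⟩
  · exact ((Set.ext_iff.1 hproper 0).2 rfl).1
  · exact eq_zero_of_mem_of_skew_cone hherm hcong hproper hA

/-- If `D` is a field (the case of a central division algebra on which the involution
restricts to the identity, so the involution on `Mₙ(D)` is the transpose) and `ε = -1`,
then the only `(-1)`-hermitian cone on `Mₙ(D)` is `{0}`.  (In particular this covers
fields of characteristic 2.) -/
theorem stmt_4 {D : Type*} [Field D] (n : ℕ)
    (M : Set (Matrix (Fin n) (Fin n) D))
    (hherm : ∀ A ∈ M, -Aᵀ = A)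
    (hadd : ∀ A ∈ M, ∀ B ∈ M, A + B ∈ M)
    (hcong : ∀ P : Matrix (Fin n) (Fin n) D, ∀ A ∈ M, P * A * Pᵀ ∈ M)
    (hzero : (0 : Matrix (Fin n) (Fin n) D) ∈ M)
    (hproper : M ∩ (-M) = {0}) :
    M = {0} :=
  stmt_4_general n M hherm hcong hproper
end

section
/- For a central division F-algebra D with involution *, ε ∈ F with ε·ε* = 1 such that ε ≠ -1 or *|_D ≠ id, and any positive integer n, the maps N ↦ F(N) := {A ∈ S_ε(M_n(D)) : xAx* ∈ N for all row vectors x ∈ Dⁿ} and M ↦ G(M) := {c ∈ S_ε(D) : c·E₁₁ ∈ M} are mutually inverse bijections between the set of ε-hermitian cones on D and the set of ε-hermitian cones on M_n(D) with the conjugate-transpose involution. -/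
/-!
`F` lands in cones and `G ∘ F = id` are direct checks; the content is `F (G M) ⊆ M`. When
`ε ≠ -1` or `σ ≠ id`, a polarization argument shows that a nonzero `ε`-hermitian matrix `A`
takes a nonzero value `d = x A x*`. With `w d = A x*`, the congruence of `A` by `1 - w x` is
`A - w d w*` (a hermitian Gram–Schmidt step): it lies again in `F (G M)` and its left radical
contains `x` in addition to that of `A`, while `w d w*` is a congruent of `d E₁₁ ∈ M`.
Induction on the left radical, which grows strictly, gives `A ∈ M`.
-/

open Matrix

/-- An `ε`-hermitian cone on a ring `R` with involution `ι`: a set of `ε`-hermitian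
elements closed under addition and under `a ↦ r a ι(r)`, with `M ∩ -M = {0}`. -/
def IsHermCone {R : Type*} [Ring R] (ι : R → R) (ε : R) (M : Set R) : Prop :=
  (∀ a ∈ M, ε * ι a = a) ∧ (∀ a ∈ M, ∀ b ∈ M, a + b ∈ M) ∧
    (∀ r : R, ∀ a ∈ M, r * a * ι r ∈ M) ∧ M ∩ (-M) = {0}

/-- The conjugate-transpose involution on `Mₙ(D)` induced by an involution `σ` on `D`. -/
def matStar {D : Type*} [Ring D] {n : ℕ} (σ : D → D)
    (A : Matrix (Fin n) (Fin n) D) : Matrix (Fin n) (Fin n) D :=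
  (Aᵀ).map σ

/-- The map `N ↦ F(N)` from `ε`-hermitian cones on `D` to `ε`-hermitian cones on `Mₙ(D)`. -/
def coneF {D : Type*} [Ring D] (σ : D → D) (ε : D) (n : ℕ) (N : Set D) :
    Set (Matrix (Fin n) (Fin n) D) :=
  {A | ε • matStar σ A = A ∧
    ∀ x : Fin n → D, (∑ i, ∑ j, x i * A i j * σ (x j)) ∈ N}

/-- The map `M ↦ G(M)` from `ε`-hermitian cones on `Mₙ(D)` to `ε`-hermitian cones on `D`. -/
def coneG {D : Type*} [Ring D] (σ : D → D) (ε : D) {n : ℕ} (hn : 0 < n)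
    (M : Set (Matrix (Fin n) (Fin n) D)) : Set D :=
  {c | ε * σ c = c ∧ Matrix.single (⟨0, hn⟩ : Fin n) ⟨0, hn⟩ c ∈ M}

namespace IsInvolution

variable {R ι : Type*} [Ring R] {σ : R → R} (hσ : IsInvolution σ)
include hσ

theorem map_add (a b : R) : σ (a + b) = σ a + σ b := hσ.1 a b

theorem map_mul (a b : R) : σ (a * b) = σ b * σ a := hσ.2.1 a b

theorem apply_apply (a : R) : σ (σ a) = a := hσ.2.2 a

def toAddMonoidHom : R →+ R := AddMonoidHom.mk' σ hσ.1

theorem map_zero : σ 0 = 0 := hσ.toAddMonoidHom.map_zero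

theorem map_sub (a b : R) : σ (a - b) = σ a - σ b := hσ.toAddMonoidHom.map_sub a b

theorem map_sum (s : Finset ι) (f : ι → R) : σ (∑ i ∈ s, f i) = ∑ i ∈ s, σ (f i) :=
  _root_.map_sum hσ.toAddMonoidHom f s

theorem map_one_s5 : σ 1 = 1 := by
  simpa [hσ.apply_apply] using congrArg σ (hσ.map_mul 1 (σ 1))

theorem map_dotProduct [Fintype ι] (x y : ι → R) : σ (x ⬝ᵥ y) = (σ ∘ y) ⬝ᵥ (σ ∘ x) := by
  simp [dotProduct, hσ.map_sum, hσ.map_mul]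

theorem comp_add (x y : ι → R) : σ ∘ (x + y) = σ ∘ x + σ ∘ y :=
  funext fun i => hσ.map_add (x i) (y i)

theorem comp_single [DecidableEq ι] (i : ι) (c : R) : σ ∘ Pi.single i c = Pi.single i (σ c) :=
  funext <| Pi.apply_single (fun _ => σ) (fun _ => hσ.map_zero) i c

/-- If `σ d = a⁻¹ d a` then `σ` is both multiplicative and anti-multiplicative, which forces
commutativity. -/
theorem eq_self_of_mul_eq_mul [NoZeroDivisors R] {a : R} (ha : a ≠ 0)
    (h : ∀ d, a * σ d = d * a) (d : R) : σ d = d := by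
  have hcomm : ∀ c e : R, c * e = e * c := fun c e => by
    refine mul_right_cancel₀ ha ?_
    calc c * e * a = a * σ (c * e) := (h _).symm
      _ = e * c * a := by rw [hσ.map_mul, ← mul_assoc, h, mul_assoc, h, mul_assoc]
  exact mul_left_cancel₀ ha (by rw [h, hcomm])

end IsInvolution

section MatStar

variable {D : Type*} [Ring D] {σ : D → D} {n : ℕ}

theorem matStar_apply (A : Matrix (Fin n) (Fin n) D) (i j : Fin n) :
    matStar σ A i j = σ (A j i) := rfl

variable (hσ : IsInvolution σ)
include hσ

theorem isInvolution_matStar : IsInvolution (matStar σ : Matrix (Fin n) (Fin n) D → _) := by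
  refine ⟨fun A B => ?_, fun A B => ?_, fun A => ?_⟩ <;> ext i j
  · simp [matStar_apply, hσ.map_add]
  · simp [matStar_apply, Matrix.mul_apply, hσ.map_sum, hσ.map_mul]
  · simp [matStar_apply, hσ.apply_apply]

theorem matStar_one : matStar σ (1 : Matrix (Fin n) (Fin n) D) = 1 := by
  ext i j
  rw [matStar_apply, Matrix.one_apply, Matrix.one_apply]
  by_cases h : i = j
  · simp [h, hσ.map_one_s5]
  · simp [h, Ne.symm h, hσ.map_zero]

theorem matStar_single (i j : Fin n) (c : D) :
    matStar σ (Matrix.single i j c) = Matrix.single j i (σ c) := by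
  ext a b
  rw [matStar_apply, Matrix.single_apply, Matrix.single_apply]
  split_ifs <;> simp_all [hσ.map_zero]

theorem matStar_vecMulVec (u x : Fin n → D) :
    matStar σ (vecMulVec u x) = vecMulVec (σ ∘ x) (σ ∘ u) := by
  ext i j; simp [matStar_apply, vecMulVec_apply, hσ.map_mul]

theorem comp_vecMul (x : Fin n → D) (R : Matrix (Fin n) (Fin n) D) :
    σ ∘ (x ᵥ* R) = matStar σ R *ᵥ (σ ∘ x) := by
  ext t; simp [vecMul, mulVec, dotProduct, matStar_apply, hσ.map_sum, hσ.map_mul]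

end MatStar

theorem Matrix.mul_smul_of_mem_center {D l m o : Type*} [Ring D] [Fintype m] {ε : D}
    (hε : ε ∈ Set.center D) (A : Matrix l m D) (B : Matrix m o D) :
    A * (ε • B) = ε • (A * B) := by
  ext i j
  simp only [Matrix.smul_apply, Matrix.mul_apply, smul_eq_mul, Finset.mul_sum]
  exact Finset.sum_congr rfl fun s _ => by
    rw [← mul_assoc, ← mul_assoc, Semigroup.mem_center_iff.mp hε]

namespace IsHermCone

variable {R : Type*} [Ring R] {ι : R → R} {ε : R} {M : Set R} (hM : IsHermCone ι ε M)
include hM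

theorem herm {a : R} (ha : a ∈ M) : ε * ι a = a := hM.1 a ha

theorem add_mem {a b : R} (ha : a ∈ M) (hb : b ∈ M) : a + b ∈ M := hM.2.1 a ha b hb

theorem mul_mul_mem (r : R) {a : R} (ha : a ∈ M) : r * a * ι r ∈ M := hM.2.2.1 r a ha

theorem zero_mem : (0 : R) ∈ M := (hM.2.2.2.symm ▸ rfl : (0 : R) ∈ M ∩ -M).1

theorem eq_zero_of_neg_mem {a : R} (ha : a ∈ M) (ha' : -a ∈ M) : a = 0 := by
  have h : a ∈ M ∩ -M := ⟨ha, ha'⟩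
  rwa [hM.2.2.2] at h

end IsHermCone

theorem isHermCone_of_zero_mem {R : Type*} [Ring R] {ι : R → R} {ε : R} {M : Set R}
    (herm : ∀ a ∈ M, ε * ι a = a) (add_mem : ∀ a ∈ M, ∀ b ∈ M, a + b ∈ M)
    (mul_mul_mem : ∀ r : R, ∀ a ∈ M, r * a * ι r ∈ M) (zero_mem : (0 : R) ∈ M)
    (eq_zero : ∀ a ∈ M, -a ∈ M → a = 0) : IsHermCone ι ε M := by
  refine ⟨herm, add_mem, mul_mul_mem, Set.ext fun a => ⟨fun ha => eq_zero a ha.1 ha.2, ?_⟩⟩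
  rintro rfl
  exact ⟨zero_mem, by simpa using zero_mem⟩

section QuadForm

variable {D : Type*} [Ring D] {n : ℕ}

def quadForm (σ : D → D) (A : Matrix (Fin n) (Fin n) D) (x : Fin n → D) : D :=
  x ⬝ᵥ A *ᵥ (σ ∘ x)

variable {σ : D → D} {ε : D}

theorem mem_coneF_iff {N : Set D} {A : Matrix (Fin n) (Fin n) D} :
    A ∈ coneF σ ε n N ↔ ε • matStar σ A = A ∧ ∀ x, quadForm σ A x ∈ N := by
  have hsum : ∀ x : Fin n → D, ∑ i, ∑ j, x i * A i j * σ (x j) = quadForm σ A x := fun x => by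
    simp [quadForm, dotProduct, mulVec, Finset.mul_sum, mul_assoc]
  change (_ ∧ ∀ x, _ ∈ N) ↔ _
  simp only [hsum]

theorem quadForm_add (A B : Matrix (Fin n) (Fin n) D) (x : Fin n → D) :
    quadForm σ (A + B) x = quadForm σ A x + quadForm σ B x := by
  simp [quadForm, add_mulVec, dotProduct_add]

theorem quadForm_neg (A : Matrix (Fin n) (Fin n) D) (x : Fin n → D) :
    quadForm σ (-A) x = -quadForm σ A x := by
  simp [quadForm, neg_mulVec]

theorem quadForm_zero (x : Fin n → D) : quadForm σ (0 : Matrix (Fin n) (Fin n) D) x = 0 := by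
  simp [quadForm]

theorem quadForm_single (k : Fin n) (c : D) (x : Fin n → D) :
    quadForm σ (Matrix.single k k c) x = x k * c * σ (x k) := by
  simp [quadForm, single_mulVec, dotProduct, Function.update_apply, mul_assoc]

variable (hσ : IsInvolution σ)
include hσ

theorem piSingle_dotProduct_mulVec_piSingle (A : Matrix (Fin n) (Fin n) D) (i j : Fin n)
    (c d : D) :
    Pi.single i c ⬝ᵥ A *ᵥ (σ ∘ Pi.single j d) = c * (A i j * σ d) := by
  rw [hσ.comp_single, mulVec_single, single_dotProduct]
  rfl

theorem quadForm_piSingle (A : Matrix (Fin n) (Fin n) D) (i : Fin n) (c : D) :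
    quadForm σ A (Pi.single i c) = c * (A i i * σ c) :=
  piSingle_dotProduct_mulVec_piSingle hσ A i i c c

theorem quadForm_piSingle_add_piSingle (A : Matrix (Fin n) (Fin n) D) (i j : Fin n) (c d : D) :
    quadForm σ A (Pi.single i c + Pi.single j d) =
      c * (A i i * σ c) + d * (A j i * σ c) + (c * (A i j * σ d) + d * (A j j * σ d)) := by
  simp only [quadForm, hσ.comp_add, mulVec_add, dotProduct_add, add_dotProduct,
    piSingle_dotProduct_mulVec_piSingle hσ]

theorem quadForm_mul_mul_matStar (R A : Matrix (Fin n) (Fin n) D) (x : Fin n → D) :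
    quadForm σ (R * A * matStar σ R) x = quadForm σ A (x ᵥ* R) := by
  rw [quadForm, quadForm, comp_vecMul hσ, ← mulVec_mulVec, ← mulVec_mulVec, dotProduct_mulVec]

theorem vecMulVec_mul_mul_matStar (u x : Fin n → D) (A : Matrix (Fin n) (Fin n) D) :
    vecMulVec u x * A * matStar σ (vecMulVec u x) =
      vecMulVec (MulOpposite.op (quadForm σ A x) • u) (σ ∘ u) := by
  rw [matStar_vecMulVec hσ, vecMulVec_mul, vecMulVec_mul_vecMulVec, ← dotProduct_mulVec,
    vecMulVec_smul', quadForm]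

theorem eq_zero_of_forall_quadForm_eq_zero [NoZeroDivisors D]
    (hcase : ε ≠ -1 ∨ ∃ d : D, σ d ≠ d) {A : Matrix (Fin n) (Fin n) D}
    (hA : ε • matStar σ A = A) (hq : ∀ x, quadForm σ A x = 0) : A = 0 := by
  have hdiag : ∀ i, A i i = 0 := fun i => by
    simpa [quadForm_piSingle hσ, hσ.map_one_s5] using hq (Pi.single i 1)
  ext i j
  obtain rfl | hij := eq_or_ne i j
  · exact hdiag i
  have hpolar : ∀ c d, d * (A j i * σ c) + c * (A i j * σ d) = 0 := fun c d => by
    have h := hq (Pi.single i c + Pi.single j d)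
    rwa [quadForm_piSingle_add_piSingle hσ, hdiag, hdiag, zero_mul, mul_zero, zero_mul, mul_zero,
      zero_add, add_zero] at h
  have hji : A j i = -A i j := by
    simpa [hσ.map_one_s5] using eq_neg_of_add_eq_zero_left (hpolar 1 1)
  by_contra hne
  have hσid : ∀ d, σ d = d := hσ.eq_self_of_mul_eq_mul hne fun d => by
    simpa [hji, hσ.map_one_s5, neg_add_eq_zero, eq_comm] using hpolar 1 d
  rcases hcase with hε | ⟨d, hd⟩
  · -- `A i j = ε A j i = -ε A i j`
    have hherm : ε * σ (A j i) = A i j := congrFun (congrFun hA i) j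
    rw [hσid, hji, mul_neg, neg_eq_iff_add_eq_zero, ← add_one_mul] at hherm
    exact hε (eq_neg_of_add_eq_zero_left ((mul_eq_zero.mp hherm).resolve_right hne))
  · exact hd (hσid d)

end QuadForm

section Hermitian

variable {D : Type*} [Ring D] {σ : D → D} {ε : D} {n : ℕ}
  (hσ : IsInvolution σ) (hεc : ε ∈ Set.center D)
include hσ hεc

theorem herm_mul_mul_matStar {A : Matrix (Fin n) (Fin n) D} (hA : ε • matStar σ A = A)
    (R : Matrix (Fin n) (Fin n) D) :
    ε • matStar σ (R * A * matStar σ R) = R * A * matStar σ R := by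
  have hstar := isInvolution_matStar hσ (n := n)
  rw [hstar.map_mul, hstar.map_mul, hstar.apply_apply, ← Matrix.mul_smul_of_mem_center hεc,
    ← Matrix.smul_mul, hA, Matrix.mul_assoc]

theorem vecMul_eq_smul_comp_mulVec {A : Matrix (Fin n) (Fin n) D} (hA : ε • matStar σ A = A)
    (x : Fin n → D) : x ᵥ* A = ε • (σ ∘ (A *ᵥ (σ ∘ x))) := by
  ext j
  simp only [vecMul, mulVec, dotProduct, Pi.smul_apply, Function.comp_apply, smul_eq_mul,
    hσ.map_sum, hσ.map_mul, hσ.apply_apply, Finset.mul_sum]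
  refine Finset.sum_congr rfl fun i _ => ?_
  rw [← congrFun (congrFun hA i) j, Matrix.smul_apply, matStar_apply, smul_eq_mul, ← mul_assoc,
    ← mul_assoc, Semigroup.mem_center_iff.mp hεc]

theorem quadForm_herm {A : Matrix (Fin n) (Fin n) D} (hA : ε • matStar σ A = A)
    (x : Fin n → D) : ε * σ (quadForm σ A x) = quadForm σ A x := by
  rw [quadForm, hσ.map_dotProduct, ← smul_eq_mul, ← smul_dotProduct,
    ← vecMul_eq_smul_comp_mulVec hσ hεc hA, ← dotProduct_mulVec]

end Hermitian

section Cones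

variable {D : Type*} [Ring D] {σ : D → D} {ε : D} {n : ℕ} (hσ : IsInvolution σ)
include hσ

theorem isHermCone_coneF [NoZeroDivisors D] (hεc : ε ∈ Set.center D)
    (hcase : ε ≠ -1 ∨ ∃ d : D, σ d ≠ d) {N : Set D} (hN : IsHermCone σ ε N) :
    IsHermCone (matStar σ) (ε • (1 : Matrix (Fin n) (Fin n) D)) (coneF σ ε n N) := by
  have hstar := isInvolution_matStar hσ (n := n)
  refine isHermCone_of_zero_mem (fun A hA => ?_) ?_ ?_ ?_ ?_
  · rw [Matrix.smul_mul, Matrix.one_mul]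
    exact (mem_coneF_iff.mp hA).1
  · simp only [mem_coneF_iff]
    rintro A ⟨hA, hqA⟩ B ⟨hB, hqB⟩
    exact ⟨by rw [hstar.map_add, smul_add, hA, hB],
      fun x => quadForm_add A B x ▸ hN.add_mem (hqA x) (hqB x)⟩
  · simp only [mem_coneF_iff]
    rintro R A ⟨hA, hqA⟩
    exact ⟨herm_mul_mul_matStar hσ hεc hA R, fun x => quadForm_mul_mul_matStar hσ R A x ▸ hqA _⟩
  · exact mem_coneF_iff.mpr ⟨by rw [hstar.map_zero, smul_zero],
      fun x => quadForm_zero x ▸ hN.zero_mem⟩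
  · simp only [mem_coneF_iff]
    rintro A ⟨hA, hqA⟩ ⟨-, hqA'⟩
    exact eq_zero_of_forall_quadForm_eq_zero hσ hcase hA fun x =>
      hN.eq_zero_of_neg_mem (hqA x) (quadForm_neg A x ▸ hqA' x)

theorem isHermCone_coneG (hεc : ε ∈ Set.center D) (hn : 0 < n)
    {M : Set (Matrix (Fin n) (Fin n) D)}
    (hM : IsHermCone (matStar σ) (ε • (1 : Matrix (Fin n) (Fin n) D)) M) :
    IsHermCone σ ε (coneG σ ε hn M) := by
  set k : Fin n := ⟨0, hn⟩
  refine isHermCone_of_zero_mem (fun c hc => hc.1) ?_ ?_ ?_ ?_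
  · rintro a ⟨ha, haM⟩ b ⟨hb, hbM⟩
    exact ⟨by rw [hσ.map_add, mul_add, ha, hb], single_add k k a b ▸ hM.add_mem haM hbM⟩
  · rintro r a ⟨ha, haM⟩
    refine ⟨?_, ?_⟩
    · calc ε * σ (r * a * σ r) = ε * (r * (σ a * σ r)) := by
            rw [hσ.map_mul, hσ.map_mul, hσ.apply_apply]
        _ = r * (ε * σ a) * σ r := by
            rw [← mul_assoc ε, ← Semigroup.mem_center_iff.mp hεc r]
            simp only [mul_assoc]
        _ = r * a * σ r := by rw [ha]
    · have h := hM.mul_mul_mem (Matrix.single k k r) haM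
      rwa [matStar_single hσ, single_mul_single_same, single_mul_single_same] at h
  · exact ⟨by rw [hσ.map_zero, mul_zero], by rw [single_zero]; exact hM.zero_mem⟩
  · rintro c ⟨-, hcM⟩ ⟨-, hcM'⟩
    have h : Matrix.single k k c = 0 :=
      hM.eq_zero_of_neg_mem hcM (by rwa [single_neg])
    simpa using congrFun (congrFun h k) k

theorem coneG_coneF (hn : 0 < n) {N : Set D} (hN : IsHermCone σ ε N) :
    coneG σ ε hn (coneF σ ε n N) = N := by
  ext c
  constructor
  · rintro ⟨-, hc⟩
    simpa [quadForm_single, hσ.map_one_s5] using (mem_coneF_iff.mp hc).2 (Pi.single ⟨0, hn⟩ 1)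
  · intro hc
    refine ⟨hN.herm hc, mem_coneF_iff.mpr ⟨?_, fun x => ?_⟩⟩
    · rw [matStar_single hσ, smul_single, smul_eq_mul, hN.herm hc]
    · rw [quadForm_single]
      exact hN.mul_mul_mem _ hc

theorem single_quadForm_eq_mul_mul_matStar (k : Fin n) (A : Matrix (Fin n) (Fin n) D)
    (x : Fin n → D) :
    Matrix.single k k (quadForm σ A x) =
      vecMulVec (Pi.single k 1) x * A * matStar σ (vecMulVec (Pi.single k 1) x) := by
  rw [vecMulVec_mul_mul_matStar hσ, hσ.comp_single, hσ.map_one_s5]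
  ext i j
  simp only [single_apply, vecMulVec_apply, Pi.smul_apply, Pi.single_apply]
  split_ifs <;> simp_all

theorem mem_coneF_coneG_of_mem (hεc : ε ∈ Set.center D) (hn : 0 < n)
    {M : Set (Matrix (Fin n) (Fin n) D)}
    (hM : IsHermCone (matStar σ) (ε • (1 : Matrix (Fin n) (Fin n) D)) M)
    {A : Matrix (Fin n) (Fin n) D} (hA : A ∈ M) : A ∈ coneF σ ε n (coneG σ ε hn M) := by
  have hherm : ε • matStar σ A = A := by
    simpa only [Matrix.smul_mul, Matrix.one_mul] using hM.herm hA
  refine mem_coneF_iff.mpr ⟨hherm, fun x => ⟨quadForm_herm hσ hεc hherm x, ?_⟩⟩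
  rw [single_quadForm_eq_mul_mul_matStar hσ]
  exact hM.mul_mul_mem _ hA

theorem vecMulVec_mem_of_mem_coneG {hn : 0 < n} {M : Set (Matrix (Fin n) (Fin n) D)}
    (hM : IsHermCone (matStar σ) (ε • (1 : Matrix (Fin n) (Fin n) D)) M)
    {d : D} (hd : d ∈ coneG σ ε hn M) (w : Fin n → D) :
    vecMulVec (MulOpposite.op d • w) (σ ∘ w) ∈ M := by
  have hq : quadForm σ (Matrix.single ⟨0, hn⟩ ⟨0, hn⟩ d) (Pi.single ⟨0, hn⟩ 1) = d := by
    simp [quadForm_single, hσ.map_one_s5]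
  rw [← hq, ← vecMulVec_mul_mul_matStar hσ]
  exact hM.mul_mul_mem _ hd.2

end Cones

section Splitting

variable {D : Type*} [DivisionRing D] {σ : D → D} {ε : D} {n : ℕ}
  (hσ : IsInvolution σ) (hεc : ε ∈ Set.center D)
  {A : Matrix (Fin n) (Fin n) D} (hA : ε • matStar σ A = A) {x w : Fin n → D}
  (hw : MulOpposite.op (quadForm σ A x) • w = A *ᵥ (σ ∘ x))
include hσ hεc hA hw

theorem vecMul_eq_quadForm_smul : x ᵥ* A = quadForm σ A x • (σ ∘ w) := by
  rw [vecMul_eq_smul_comp_mulVec hσ hεc hA, ← hw]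
  ext j
  simp only [Pi.smul_apply, Function.comp_apply, smul_eq_mul, MulOpposite.smul_eq_mul_unop,
    MulOpposite.unop_op, hσ.map_mul, ← mul_assoc, quadForm_herm hσ hεc hA]

theorem mul_mul_matStar_sub_vecMulVec :
    (1 - vecMulVec w x) * A * matStar σ (1 - vecMulVec w x) =
      A - vecMulVec (MulOpposite.op (quadForm σ A x) • w) (σ ∘ w) := by
  have hleft : vecMulVec w x * A = vecMulVec (MulOpposite.op (quadForm σ A x) • w) (σ ∘ w) := by
    rw [vecMulVec_mul, vecMul_eq_quadForm_smul hσ hεc hA hw, vecMulVec_smul']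
  have hright : A * matStar σ (vecMulVec w x) =
      vecMulVec (MulOpposite.op (quadForm σ A x) • w) (σ ∘ w) := by
    rw [matStar_vecMulVec hσ, mul_vecMulVec, hw]
  have hstar := isInvolution_matStar hσ (n := n)
  rw [hstar.map_sub, matStar_one hσ]
  simp only [sub_mul, mul_sub, one_mul, mul_one]
  rw [vecMulVec_mul_mul_matStar hσ, hleft, hright]
  abel

theorem ker_vecMulLinear_lt (hd : quadForm σ A x ≠ 0) :
    LinearMap.ker A.vecMulLinear < LinearMap.ker
      (A - vecMulVec (MulOpposite.op (quadForm σ A x) • w) (σ ∘ w)).vecMulLinear := by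
  have hdot : ∀ y, y ⬝ᵥ MulOpposite.op (quadForm σ A x) • w = y ᵥ* A ⬝ᵥ (σ ∘ x) := fun y => by
    rw [hw, dotProduct_mulVec]
  refine SetLike.lt_iff_le_and_exists.mpr ⟨fun y hy => ?_, x, ?_, fun hx => hd ?_⟩
  · simp only [LinearMap.mem_ker, vecMulLinear_apply] at hy ⊢
    rw [vecMul_sub, vecMul_vecMulVec, hdot, hy, zero_dotProduct, zero_smul, sub_zero]
  · simp only [LinearMap.mem_ker, vecMulLinear_apply]
    rw [vecMul_sub, vecMul_vecMulVec, hdot, ← dotProduct_mulVec, ← quadForm,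
      vecMul_eq_quadForm_smul hσ hεc hA hw, sub_self]
  · simp only [LinearMap.mem_ker, vecMulLinear_apply] at hx
    rw [quadForm, dotProduct_mulVec, hx, zero_dotProduct]

end Splitting

theorem mem_of_mem_coneF_coneG {D : Type*} [DivisionRing D] {σ : D → D} {ε : D} {n : ℕ}
    (hσ : IsInvolution σ) (hεc : ε ∈ Set.center D) (hcase : ε ≠ -1 ∨ ∃ d : D, σ d ≠ d)
    (hn : 0 < n) {M : Set (Matrix (Fin n) (Fin n) D)}
    (hM : IsHermCone (matStar σ) (ε • (1 : Matrix (Fin n) (Fin n) D)) M)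
    {A : Matrix (Fin n) (Fin n) D} (hA : A ∈ coneF σ ε n (coneG σ ε hn M)) : A ∈ M := by
  have hC := isHermCone_coneF (n := n) hσ hεc hcase (isHermCone_coneG hσ hεc hn hM)
  suffices ∀ K : Submodule D (Fin n → D), ∀ A ∈ coneF σ ε n (coneG σ ε hn M),
      LinearMap.ker A.vecMulLinear = K → A ∈ M from this _ A hA rfl
  intro K
  induction K using WellFoundedGT.induction with
  | _ K ih =>
  rintro A hA rfl
  obtain ⟨hherm, hq⟩ := mem_coneF_iff.mp hA
  by_cases hA0 : A = 0
  · exact hA0 ▸ hM.zero_mem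
  obtain ⟨x, hx⟩ : ∃ x, quadForm σ A x ≠ 0 := by
    by_contra! h
    exact hA0 (eq_zero_of_forall_quadForm_eq_zero hσ hcase hherm h)
  set w := MulOpposite.op (quadForm σ A x)⁻¹ • (A *ᵥ (σ ∘ x))
  have hw : MulOpposite.op (quadForm σ A x) • w = A *ᵥ (σ ∘ x) := by
    rw [smul_smul, ← MulOpposite.op_mul, inv_mul_cancel₀ hx, MulOpposite.op_one, one_smul]
  have hsplit := mul_mul_matStar_sub_vecMulVec hσ hεc hherm hw
  have hA' := hsplit ▸ hC.mul_mul_mem (1 - vecMulVec w x) hA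
  have hA'M := ih _ (ker_vecMulLinear_lt hσ hεc hherm hw hx) _ hA' rfl
  simpa using hM.add_mem hA'M (vecMulVec_mem_of_mem_coneG hσ hM (hq x) w)

theorem stmt_5_general {D : Type*} [DivisionRing D]
    (σ : D → D) (hσ : IsInvolution σ) (ε : D)
    (hεcent : ε ∈ Set.center D)
    (hcase : ε ≠ -1 ∨ ∃ d : D, σ d ≠ d)
    (n : ℕ) (hn : 0 < n) :
    (∀ N : Set D, IsHermCone σ ε N →
        IsHermCone (matStar σ) (ε • (1 : Matrix (Fin n) (Fin n) D)) (coneF σ ε n N) ∧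
        coneG σ ε hn (coneF σ ε n N) = N) ∧
    (∀ M : Set (Matrix (Fin n) (Fin n) D),
        IsHermCone (matStar σ) (ε • (1 : Matrix (Fin n) (Fin n) D)) M →
        IsHermCone σ ε (coneG σ ε hn M) ∧ coneF σ ε n (coneG σ ε hn M) = M) :=
  ⟨fun _ hN => ⟨isHermCone_coneF hσ hεcent hcase hN, coneG_coneF hσ hn hN⟩,
    fun _ hM => ⟨isHermCone_coneG hσ hεcent hn hM,
      Set.Subset.antisymm (fun _ hA => mem_of_mem_coneF_coneG hσ hεcent hcase hn hM hA)
        (fun _ hA => mem_coneF_coneG_of_mem hσ hεcent hn hM hA)⟩⟩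

/-- For a central division algebra `D` with involution `σ` and central `ε` with
`ε σ(ε) = 1`, if `ε ≠ -1` or `σ ≠ id`, then `F` and `G` are mutually inverse bijections
between `ε`-hermitian cones on `D` and `ε`-hermitian cones on `Mₙ(D)` with the
conjugate-transpose involution. -/
theorem stmt_5 {D : Type*} [DivisionRing D]
    (σ : D → D) (hσ : IsInvolution σ) (ε : D)
    (hεcent : ε ∈ Set.center D) (hε : ε * σ ε = 1)
    (hcase : ε ≠ -1 ∨ ∃ d : D, σ d ≠ d)
    (n : ℕ) (hn : 0 < n) :
    (∀ N : Set D, IsHermCone σ ε N →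
        IsHermCone (matStar σ) (ε • (1 : Matrix (Fin n) (Fin n) D)) (coneF σ ε n N) ∧
        coneG σ ε hn (coneF σ ε n N) = N) ∧
    (∀ M : Set (Matrix (Fin n) (Fin n) D),
        IsHermCone (matStar σ) (ε • (1 : Matrix (Fin n) (Fin n) D)) M →
        IsHermCone σ ε (coneG σ ε hn M) ∧ coneF σ ε n (coneG σ ε hn M) = M) :=
  stmt_5_general σ hσ ε hεcent hcase n hn
end

section
/- Every ε-hermitian matrix over a division ring D with involution * is congruent to a direct sum of 1x1 blocks [a] with a ∈ S_ε(D) and 2x2 blocks [[0,b],[εb*,0]] with b ∈ D. Moreover, if ε ≠ -1 or *|_D ≠ id, every matrix of the form [[0,b],[εb*,0]] is congruent to a diagonal matrix. -/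
open Matrix

/-- `B` is (up to simultaneous permutation) a direct sum of 1×1 blocks `[a]` with
`ε σ(a) = a` and 2×2 blocks `[[0, b], [ε σ(b), 0]]`: there is an involutive pairing
`p` of the indices so that `B` vanishes outside the blocks, the 1×1 blocks are
`ε`-hermitian, and the 2×2 blocks have the stated form. -/
def IsBlockDiagForm {D : Type*} [Ring D] {n : ℕ} (σ : D → D) (ε : D)
    (B : Matrix (Fin n) (Fin n) D) : Prop :=
  ∃ p : Fin n → Fin n, (∀ i, p (p i) = i) ∧
    (∀ i j, j ≠ i → j ≠ p i → B i j = 0) ∧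
    (∀ i, p i = i → ε * σ (B i i) = B i i) ∧
    (∀ i, p i ≠ i → B i i = 0 ∧ B (p i) i = ε * σ (B i (p i)))

/-!
Induction on the size. A nonzero `ε`-hermitian matrix has a nonzero diagonal entry `a_rr`, or
else a nonzero entry `a_rs` with `r ≠ s` and `a_rr = a_ss = 0`; either way the principal block on
`{r, s}` is invertible and already of the required shape. The unipotent congruence
`[[1, -A₁₁⁻¹ A₁₂], [0, 1]]` clears the rows of this block, hermitian symmetry clears its columns,
and what remains is an `ε`-hermitian matrix of smaller size.

For `b ≠ 0` the vector `(1, b⁻¹ c)` has value `c + ε c*` under `[[0, b], [ε b*, 0]]`, and some `c`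
makes this nonzero unless `ε = -1` and `*` is the identity. Taking it as the first basis vector
and clearing once more diagonalizes the block.
-/

abbrev IsInvolution.toStarRing {R : Type*} [Ring R] {τ : R → R} (h : IsInvolution τ) :
    StarRing R where
  star := τ
  star_involutive := h.2.2
  star_mul := h.2.1
  star_add := h.1

namespace Matrix

variable {D : Type*} [DivisionRing D] {ε : D} {I J K L : Type*}

lemma mul_smul_of_mem_center_s6 [Fintype J] (hε : ε ∈ Set.center D) (M : Matrix I J D)
    (N : Matrix J K D) : M * (ε • N) = ε • (M * N) := by
  ext i k
  simp only [smul_apply, mul_apply, smul_eq_mul, Finset.mul_sum]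
  refine Finset.sum_congr rfl fun j _ => ?_
  rw [← mul_assoc, ← mul_assoc, (hε.comm _).eq]

lemma isUnit_of_eq_zero_of_ne_perm [Fintype I] [DecidableEq I] {B : Matrix I I D}
    (p : Equiv.Perm I) (hzero : ∀ i j, j ≠ p i → B i j = 0) (hne : ∀ i, B i (p i) ≠ 0) :
    IsUnit B := by
  refine IsUnit.of_mul_eq_one (of fun j i => if j = p i then (B i j)⁻¹ else 0) ?_
  ext i k
  rw [mul_apply, Finset.sum_eq_single (p i) (fun j _ hj => by rw [hzero i j hj, zero_mul])
    (by simp)]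
  by_cases hik : i = k
  · subst hik
    simp [hne]
  · simp [hik, one_apply_ne hik]

lemma _root_.IsUnit.submatrix_equiv [Fintype I] [Fintype J] [DecidableEq I] [DecidableEq J]
    {P : Matrix J J D} (hP : IsUnit P) (e : J ≃ I) : IsUnit (P.submatrix e.symm e.symm) :=
  hP.map (reindexAlgEquiv ℕ D e)

lemma _root_.IsUnit.fromBlocks_zero₂₁ [Fintype K] [Fintype L] [DecidableEq K] [DecidableEq L]
    {A : Matrix K K D} {B : Matrix K L D} {C : Matrix L L D} (hA : IsUnit A) (hC : IsUnit C) :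
    IsUnit (fromBlocks A B 0 C) := by
  obtain ⟨u, rfl⟩ := hA
  obtain ⟨v, rfl⟩ := hC
  refine IsUnit.of_mul_eq_one (fromBlocks u.inv (-(u.inv * B * v.inv)) 0 v.inv) ?_
  simp [fromBlocks_multiply, ← Matrix.mul_assoc]

lemma exists_pair_pivot {A : Matrix I I D} (hA : A ≠ 0) :
    ∃ r s, A r s ≠ 0 ∧ (r ≠ s → A r r = 0 ∧ A s s = 0) := by
  by_cases hdiag : ∃ i, A i i ≠ 0
  · obtain ⟨i, hi⟩ := hdiag
    exact ⟨i, i, hi, fun h => absurd rfl h⟩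
  · push Not at hdiag
    obtain ⟨r, s, hrs⟩ : ∃ r s, A r s ≠ 0 := by
      by_contra! h
      exact hA (ext h)
    exact ⟨r, s, hrs, fun _ => ⟨hdiag r, hdiag s⟩⟩

variable [StarRing D]

def IsEpsHermitian (ε : D) (A : Matrix I I D) : Prop := ε • Aᴴ = A

def IsPairedBlockDiag (ε : D) (B : Matrix I I D) : Prop :=
  ∃ p : I → I, (∀ i, p (p i) = i) ∧
    (∀ i j, j ≠ i → j ≠ p i → B i j = 0) ∧
    (∀ i, p i = i → ε * star (B i i) = B i i) ∧
    (∀ i, p i ≠ i → B i i = 0 ∧ B (p i) i = ε * star (B i (p i)))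

lemma conjTranspose_submatrix_mul_mul [Fintype I] [Fintype J] (e : J ≃ I) (P : Matrix J J D)
    (A : Matrix I I D) :
    (P.submatrix e.symm e.symm)ᴴ * A * P.submatrix e.symm e.symm =
      (Pᴴ * A.submatrix e e * P).submatrix e.symm e.symm := by
  conv_lhs => rw [← submatrix_id_id A, ← e.self_comp_symm, ← submatrix_submatrix]
  rw [conjTranspose_submatrix, submatrix_mul_equiv, submatrix_mul_equiv]

lemma conjTranspose_mul_mul_mul [Fintype I] [Fintype J] [Fintype K] (P : Matrix I J D)
    (Q : Matrix J K D) (A : Matrix I I D) : (P * Q)ᴴ * A * (P * Q) = Qᴴ * (Pᴴ * A * P) * Q := by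
  simp only [conjTranspose_mul, Matrix.mul_assoc]

namespace IsEpsHermitian

variable {A : Matrix I I D}

lemma apply (hA : IsEpsHermitian ε A) (i j : I) : ε * star (A j i) = A i j := by
  simpa using congr_fun₂ hA i j

lemma submatrix (hA : IsEpsHermitian ε A) (f : J → I) : IsEpsHermitian ε (A.submatrix f f) := by
  ext i j
  exact hA.apply (f i) (f j)

lemma conjTranspose_mul_mul [Fintype I] [Fintype J] (hA : IsEpsHermitian ε A)
    (hε : ε ∈ Set.center D) (P : Matrix I J D) : IsEpsHermitian ε (Pᴴ * A * P) := by
  rw [IsEpsHermitian, conjTranspose_mul, conjTranspose_mul, conjTranspose_conjTranspose,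
    ← Matrix.mul_assoc, ← smul_mul, ← mul_smul_of_mem_center_s6 hε, hA]

end IsEpsHermitian

lemma isPairedBlockDiag_zero : IsPairedBlockDiag ε (0 : Matrix I I D) :=
  ⟨id, fun _ => rfl, fun _ _ _ _ => rfl, fun _ _ => by simp, fun _ h => absurd rfl h⟩

namespace IsPairedBlockDiag

lemma submatrix_equiv {B : Matrix I I D} (hB : IsPairedBlockDiag ε B) (e : J ≃ I) :
    IsPairedBlockDiag ε (B.submatrix e e) := by
  obtain ⟨p, hp, hzero, hfix, hpair⟩ := hB
  refine ⟨fun j => e.symm (p (e j)), fun j => by simp [hp], fun i j hji hjp => ?_,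
    fun i hi => ?_, fun i hi => ?_⟩
  · exact hzero _ _ (e.injective.ne hji) (by rintro h; exact hjp (by simp [← h]))
  · exact hfix _ (by simpa [Equiv.symm_apply_eq] using hi)
  · simpa using hpair (e i) (by rintro h; exact hi (by simp [h]))

lemma fromBlocks {A : Matrix K K D} {B : Matrix L L D} (hA : IsPairedBlockDiag ε A)
    (hB : IsPairedBlockDiag ε B) : IsPairedBlockDiag ε (fromBlocks A 0 0 B) := by
  obtain ⟨p, hp, hpzero, hpfix, hppair⟩ := hA
  obtain ⟨q, hq, hqzero, hqfix, hqpair⟩ := hB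
  refine ⟨Sum.map p q, ?_, ?_, ?_, ?_⟩
  · rintro (i | i) <;> simp [hp, hq]
  · rintro (i | i) (j | j) hji hjp <;> simp_all
  · rintro (i | i) hi <;> simp_all
  · rintro (i | i) hi <;> simp_all

end IsPairedBlockDiag

lemma IsEpsHermitian.exists_conjTranspose_mul_mul_eq_fromBlocks [Fintype K] [Fintype L]
    [DecidableEq K] [DecidableEq L] {M : Matrix (K ⊕ L) (K ⊕ L) D} (hM : IsEpsHermitian ε M)
    (hε : ε ∈ Set.center D) (h₁₁ : IsUnit M.toBlocks₁₁) :
    ∃ P, IsUnit P ∧ ∃ S : Matrix L L D, IsEpsHermitian ε S ∧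
      Pᴴ * M * P = fromBlocks M.toBlocks₁₁ 0 0 S := by
  obtain ⟨A, B, C, E, rfl⟩ : ∃ A B C E, M = fromBlocks A B C E :=
    ⟨_, _, _, _, (fromBlocks_toBlocks M).symm⟩
  rw [toBlocks_fromBlocks₁₁] at h₁₁ ⊢
  obtain ⟨u, rfl⟩ := h₁₁
  set P : Matrix (K ⊕ L) (K ⊕ L) D := fromBlocks 1 (-(u.inv * B)) 0 1
  set N := Pᴴ * fromBlocks (↑u) B C E * P
  have hN : IsEpsHermitian ε N := hM.conjTranspose_mul_mul hε P
  have hN₁₁ : N.toBlocks₁₁ = u := by simp [N, P, fromBlocks_conjTranspose, fromBlocks_multiply]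
  have hN₁₂ : N.toBlocks₁₂ = 0 := by
    simp [N, P, fromBlocks_conjTranspose, fromBlocks_multiply, ← Matrix.mul_assoc]
  have hN₂₁ : N.toBlocks₂₁ = 0 := by
    ext i j
    have h := congr_fun₂ hN₁₂ j i
    simp only [toBlocks₁₂, toBlocks₂₁, of_apply, zero_apply] at h ⊢
    rw [← hN.apply, h, star_zero, mul_zero]
  refine ⟨P, isUnit_one.fromBlocks_zero₂₁ isUnit_one, N.toBlocks₂₂, hN.submatrix Sum.inr, ?_⟩
  change N = _
  rw [← hN₁₁, ← hN₁₂, ← hN₂₁, fromBlocks_toBlocks]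

lemma IsEpsHermitian.isUnit_and_isPairedBlockDiag_pair [Fintype I] [DecidableEq I]
    {A : Matrix I I D} (hA : IsEpsHermitian ε A) (hε : ε ≠ 0) {r s : I} (hrs : A r s ≠ 0)
    (hdiag : r ≠ s → A r r = 0 ∧ A s s = 0) :
    letI B : Matrix {i // i = r ∨ i = s} {i // i = r ∨ i = s} D :=
      A.submatrix Subtype.val Subtype.val
    IsUnit B ∧ IsPairedBlockDiag ε B := by
  let q : {i // i = r ∨ i = s} → {i // i = r ∨ i = s} := fun i =>
    if i.1 = r then ⟨s, Or.inr rfl⟩ else ⟨r, Or.inl rfl⟩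
  have hq_val : ∀ i, (q i : I) = if i.1 = r then s else r := fun i => by
    simp only [q]; split_ifs <;> rfl
  have hq_cases : ∀ i j, j = i ∨ j = q i := by
    rintro ⟨i, rfl | rfl⟩ ⟨j, rfl | rfl⟩ <;> simp [Subtype.ext_iff, hq_val, eq_comm]
  have hqq : Function.Involutive q := by
    rintro ⟨i, rfl | rfl⟩ <;> ext <;> simp [hq_val]
  have hq_ne : ∀ i, q i ≠ i → r ≠ s := by
    rintro ⟨i, rfl | rfl⟩ hi hrs' <;> subst hrs' <;> simp [Subtype.ext_iff, hq_val] at hi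
  have hq_apply : ∀ i : {i // i = r ∨ i = s}, A i (q i) ≠ 0 := by
    rintro ⟨i, rfl | rfl⟩
    · simpa [hq_val] using hrs
    · rw [hq_val]
      split_ifs with h
      · obtain rfl : i = r := h
        exact hrs
      · rw [← hA.apply]
        exact mul_ne_zero hε (star_ne_zero.mpr hrs)
  have hq_diag : ∀ i : {i // i = r ∨ i = s}, q i ≠ i → A i i = 0 := by
    intro i hi
    obtain ⟨hr, hs⟩ := hdiag (hq_ne i hi)
    rcases i.2 with h | h <;> simp [h, hr, hs]
  refine ⟨isUnit_of_eq_zero_of_ne_perm (hqq.toPerm q) (fun i j hj => ?_) hq_apply,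
    q, hqq, fun i j hji hjq => absurd (hq_cases i j) (by tauto), fun i _ => hA.apply i i,
    fun i hi => ⟨hq_diag i hi, (hA.apply _ _).symm⟩⟩
  obtain rfl := (hq_cases i j).resolve_right hj
  exact hq_diag j (Ne.symm hj)

theorem IsEpsHermitian.exists_isUnit_isPairedBlockDiag (hε : ε ≠ 0) (hεc : ε ∈ Set.center D)
    [Fintype I] [DecidableEq I] {A : Matrix I I D} (hA : IsEpsHermitian ε A) :
    ∃ P, IsUnit P ∧ IsPairedBlockDiag ε (Pᴴ * A * P) := by
  induction hn : Fintype.card I using Nat.strong_induction_on generalizing I with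
  | _ n ih =>
  by_cases hA0 : A = 0
  · exact ⟨1, isUnit_one, by simpa [hA0] using isPairedBlockDiag_zero⟩
  obtain ⟨r, s, hrs, hdiag⟩ := exists_pair_pivot hA0
  obtain ⟨hBu, hBd⟩ := hA.isUnit_and_isPairedBlockDiag_pair hε hrs hdiag
  let e := Equiv.sumCompl (fun i => i = r ∨ i = s)
  obtain ⟨P, hPu, S, hS, hPS⟩ :=
    (hA.submatrix e).exists_conjTranspose_mul_mul_eq_fromBlocks hεc hBu
  obtain ⟨Q, hQu, hQS⟩ := ih _ (hn ▸ Fintype.card_subtype_lt (x := r) (by simp)) hS rfl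
  refine ⟨(P * fromBlocks 1 0 0 Q).submatrix e.symm e.symm,
    (hPu.mul (isUnit_one.fromBlocks_zero₂₁ hQu)).submatrix_equiv e, ?_⟩
  rw [conjTranspose_submatrix_mul_mul, conjTranspose_mul_mul_mul, hPS]
  convert (hBd.fromBlocks hQS).submatrix_equiv e.symm using 2
  simp [fromBlocks_conjTranspose, fromBlocks_multiply]
  rfl

lemma exists_add_mul_star_ne_zero (h : ε ≠ -1 ∨ ∃ d : D, star d ≠ d) :
    ∃ c : D, c + ε * star c ≠ 0 := by
  by_contra! hc
  have hε : ε = -1 := eq_neg_of_add_eq_zero_right (by simpa using hc 1)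
  obtain h | ⟨d, hd⟩ := h
  · exact h hε
  · have hd' := hc d
    rw [hε, neg_one_mul, add_neg_eq_zero] at hd'
    exact hd hd'.symm

lemma IsEpsHermitian.exists_isUnit_isDiag_of_apply_zero_zero_ne_zero
    {M : Matrix (Fin 2) (Fin 2) D} (hM : IsEpsHermitian ε M) (hε : ε ∈ Set.center D)
    (h : M 0 0 ≠ 0) : ∃ P, IsUnit P ∧ (Pᴴ * M * P).IsDiag := by
  let e : Fin 1 ⊕ Fin 1 ≃ Fin 2 := finSumFinEquiv
  have h₁₁ : IsUnit (M.submatrix e e).toBlocks₁₁ :=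
    isUnit_of_eq_zero_of_ne_perm (Equiv.refl _) (fun i j hj => absurd (Subsingleton.elim _ _) hj)
      (fun i => by rw [Fin.fin_one_eq_zero i]; exact h)
  obtain ⟨P, hP, S, -, hPS⟩ := (hM.submatrix e).exists_conjTranspose_mul_mul_eq_fromBlocks hε h₁₁
  refine ⟨P.submatrix e.symm e.symm, hP.submatrix_equiv e, ?_⟩
  rw [conjTranspose_submatrix_mul_mul, hPS]
  exact ((isDiag_of_subsingleton _).fromBlocks (isDiag_of_subsingleton _)).submatrix
    e.symm.injective

lemma isEpsHermitian_antidiag (hεc : ε ∈ Set.center D) (hε : ε * star ε = 1) (b : D) :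
    IsEpsHermitian ε !![0, b; ε * star b, 0] := by
  have : ε * (b * star ε) = b := by rw [← mul_assoc, (hεc.comm b).eq, mul_assoc, hε, mul_one]
  ext i j
  fin_cases i <;> fin_cases j <;> simp [this]

theorem exists_isUnit_isDiag_antidiag (hεc : ε ∈ Set.center D) (hε : ε * star ε = 1) {c : D}
    (hc : c + ε * star c ≠ 0) (b : D) :
    ∃ P : Matrix (Fin 2) (Fin 2) D, IsUnit P ∧ (Pᴴ * !![0, b; ε * star b, 0] * P).IsDiag := by
  rcases eq_or_ne b 0 with rfl | hb
  · exact ⟨1, isUnit_one, fun i j _ => by fin_cases i <;> fin_cases j <;> simp⟩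
  let T : Matrix (Fin 2) (Fin 2) D := !![1, 0; b⁻¹ * c, 1]
  have hT : IsUnit T := IsUnit.of_mul_eq_one !![1, 0; -(b⁻¹ * c), 1] (by simp [T, one_fin_two])
  have hT₀₀ : (Tᴴ * !![0, b; ε * star b, 0] * T) 0 0 = c + ε * star c := by
    simp [T, mul_apply, Fin.sum_univ_two]
    rw [mul_inv_cancel_left₀ hb, (hεc.comm (star b)).eq, mul_assoc,
      inv_mul_cancel_left₀ (star_ne_zero.2 hb), ← (hεc.comm _).eq, add_comm]
  obtain ⟨Q, hQ, hQd⟩ := ((isEpsHermitian_antidiag hεc hε b).conjTranspose_mul_mul hεc T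
    ).exists_isUnit_isDiag_of_apply_zero_zero_ne_zero hεc (hT₀₀ ▸ hc)
  exact ⟨T * Q, hT.mul hQ, by rwa [conjTranspose_mul_mul_mul]⟩

end Matrix

/-- Diagonalization theorem: every `ε`-hermitian matrix over a division ring `D` with
involution `σ` is congruent to a direct sum of 1×1 blocks `[a]`, `a ∈ S_ε(D)`, and 2×2
blocks `[[0,b],[ε σ(b),0]]`.  Moreover, if `ε ≠ -1` or `σ ≠ id`, every matrix
`[[0,b],[ε σ(b),0]]` is congruent to a diagonal matrix. -/
theorem stmt_6 {D : Type*} [DivisionRing D]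
    (σ : D → D) (hσ : IsInvolution σ) (ε : D)
    (hεcent : ε ∈ Set.center D) (hε : ε * σ ε = 1) :
    (∀ (n : ℕ) (A : Matrix (Fin n) (Fin n) D), ε • matStar σ A = A →
        ∃ P : Matrix (Fin n) (Fin n) D, IsUnit P ∧
          IsBlockDiagForm σ ε (matStar σ P * A * P)) ∧
    ((ε ≠ -1 ∨ ∃ d : D, σ d ≠ d) → ∀ b : D,
        ∃ P : Matrix (Fin 2) (Fin 2) D, IsUnit P ∧
          (matStar σ P * !![0, b; ε * σ b, 0] * P).IsDiag) := by
  let := hσ.toStarRing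
  -- Under this instance `matStar σ` is `ᴴ`, and `IsBlockDiagForm σ` is `IsPairedBlockDiag`.
  refine ⟨fun n A hA => ?_, fun hΔ b => ?_⟩
  · exact Matrix.IsEpsHermitian.exists_isUnit_isPairedBlockDiag
      (left_ne_zero_of_mul_eq_one hε) hεcent hA
  · obtain ⟨c, hc⟩ := Matrix.exists_add_mul_star_ne_zero hΔ
    exact Matrix.exists_isUnit_isDiag_antidiag hεcent hε hc b
end

section
/- Let D be a central division algebra over F with involution * and suppose X^# = A⁻¹X*A on M_n(D) where A is invertible with A* = -A and *|_D = id. Then # is not formally real, i.e., there is a finite sum of nonzero elements of the form X^#·X equal to zero. -/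
open Matrix

/-! The diagonal entries of a skew matrix satisfy `a + a = 0`, so for a matrix unit `E = Eᵢᵢ`
the element `E^# E = A⁻¹ (A i i) E` is annihilated by doubling; `E^# E + E^# E = 0` is the
required vanishing sum, in every characteristic. -/

theorem Matrix.add_self_diag_eq_zero_of_transpose_eq_neg {n R : Type*} [Ring R]
    {A : Matrix n n R} (hA : Aᵀ = -A) (i : n) : A i i + A i i = 0 :=
  neg_eq_iff_add_eq_zero.mp (congrFun (congrFun hA i) i).symm

theorem Matrix.single_transpose_mul_mul_single_add_self_eq_zero {n R : Type*} [Fintype n]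
    [DecidableEq n] [Ring R] {A : Matrix n n R} (hA : Aᵀ = -A) (i : n) :
    (single i i (1 : R))ᵀ * A * single i i 1 + (single i i 1)ᵀ * A * single i i 1 = 0 := by
  rw [transpose_single, single_mul_mul_single, ← single_add, one_mul, mul_one,
    add_self_diag_eq_zero_of_transpose_eq_neg hA, single_zero]

/-- If `D` is a field (involution restricting to the identity on `D`), `A ∈ Mₙ(D)` is
invertible with `Aᵀ = -A`, and `X^# = A⁻¹ Xᵀ A`, then `#` is not formally real: there
is a vanishing finite sum of nonzero elements of the form `X^# X`. -/
theorem stmt_9 {D : Type*} [Field D] {n : ℕ} (hn : 0 < n)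
    (A : Matrix (Fin n) (Fin n) D) [Invertible A]
    (hA : Aᵀ = -A) :
    ∃ (k : ℕ) (X : Fin k → Matrix (Fin n) (Fin n) D), 0 < k ∧
      (∀ i, X i ≠ 0) ∧
      (∑ i, (⅟A * (X i)ᵀ * A) * X i) = 0 := by
  let i : Fin n := ⟨0, hn⟩
  refine ⟨2, fun _ => single i i 1, two_pos, fun _ h => ?_, ?_⟩
  · simpa using congrFun (congrFun h i) i
  · have sharp_mul_self (X : Matrix (Fin n) (Fin n) D) :
        ⅟A * Xᵀ * A * X = ⅟A * (Xᵀ * A * X) := by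
      simp only [Matrix.mul_assoc]
    rw [Fin.sum_univ_two, sharp_mul_self, ← Matrix.mul_add,
      single_transpose_mul_mul_single_add_self_eq_zero hA, Matrix.mul_zero]
end

section
/- Let D be a division algebra with involution *. Then there exists a maximal (self-centralizing) subfield K of D with K* ⊆ K. -/
def Subfield.centralizer {D : Type*} [DivisionRing D] (s : Set D) : Subfield D :=
  { Subring.centralizer s with inv_mem' := fun _ => Set.inv_mem_centralizer₀ }

theorem Subfield.coe_centralizer {D : Type*} [DivisionRing D] (s : Set D) :
    (Subfield.centralizer s : Set D) = s.centralizer :=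
  rfl

theorem Set.union_subset_centralizer_union {M : Type*} [Mul M] {s t : Set M}
    (hs : s ⊆ s.centralizer) (ht : t ⊆ t.centralizer) (hst : t ⊆ s.centralizer) :
    s ∪ t ⊆ (s ∪ t).centralizer := by
  rw [Set.centralizer_union]
  refine Set.union_subset (Set.subset_inter hs fun a ha b hb => (hst hb a ha).symm)
    (Set.subset_inter hst ht)

theorem exists_maximal_commuting_mapsTo {M : Type*} [Mul M] (f : M → M) :
    ∃ m : Set M, Maximal (fun s => s ⊆ s.centralizer ∧ Set.MapsTo f s s) m := by
  refine zorn_subset _ fun c hcS hc => ⟨⋃₀ c, ⟨?_, ?_⟩, fun s hs => Set.subset_sUnion_of_mem hs⟩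
  · rintro a ⟨s, hs, ha⟩ b ⟨t, ht, hb⟩
    rcases hc.total hs ht with hst | hts
    · exact (hcS ht).1 (hst ha) b hb
    · exact (hcS hs).1 ha b (hts hb)
  · rintro a ⟨s, hs, ha⟩
    exact ⟨s, hs, (hcS hs).2 ha⟩

namespace IsInvolution

variable {R : Type*} [Ring R] {σ : R → R}

theorem mapsTo_centralizer (hσ : IsInvolution σ) {s : Set R} (hs : Set.MapsTo σ s s) :
    Set.MapsTo σ s.centralizer s.centralizer := by
  obtain ⟨-, hmul, hinv⟩ := hσ
  intro x hx k hk
  calc k * σ x = σ (x * σ k) := by rw [hmul, hinv]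
    _ = σ (σ k * x) := by rw [hx (σ k) (hs hk)]
    _ = σ x * k := by rw [hmul, hinv]

theorem centralizer_eq_of_maximal (hσ : IsInvolution σ) {M : Set R}
    (hM : Maximal (fun s => s ⊆ s.centralizer ∧ Set.MapsTo σ s s) M) :
    M.centralizer = M := by
  obtain ⟨⟨hMcomm, hMσ⟩, hMmax⟩ := hM
  have adjoin {t : Set R} (ht : t ⊆ t.centralizer) (htM : t ⊆ M.centralizer)
      (htσ : Set.MapsTo σ t t) : t ⊆ M := fun _ hx =>
    hMmax ⟨Set.union_subset_centralizer_union hMcomm ht htM, hMσ.union_union htσ⟩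
      Set.subset_union_left (Set.subset_union_right hx)
  refine subset_antisymm (fun x hx => ?_) hMcomm
  have hσx : σ x ∈ M.centralizer := hσ.mapsTo_centralizer hMσ hx
  obtain ⟨hadd, -, hinv⟩ := hσ
  have htrace : x + σ x ∈ M := by
    refine Set.singleton_subset_iff.1 <| adjoin (by rintro _ rfl _ rfl; rfl)
      (Set.singleton_subset_iff.2 (Set.add_mem_centralizer hx hσx)) ?_
    rintro _ rfl
    rw [hadd, hinv, add_comm]
    exact Set.mem_singleton _
  have hcomm : x * σ x = σ x * x := by
    have := hx _ htrace
    rw [add_mul, mul_add] at this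
    exact (add_left_cancel this).symm
  refine adjoin (t := {x, σ x}) ?_ (Set.pair_subset hx hσx) ?_ (Set.mem_insert x _)
  · simp [Set.pair_subset_iff, Set.mem_centralizer_iff, hcomm]
  · rintro y (rfl | rfl)
    · exact Set.mem_insert_of_mem _ rfl
    · rw [hinv]
      exact Set.mem_insert _ _

end IsInvolution

theorem stmt_11_general {D : Type*} [DivisionRing D]
    (σ : D → D) (hσ : IsInvolution σ) :
    ∃ K : Subfield D, (∀ x ∈ K, σ x ∈ K) ∧
      Set.centralizer (K : Set D) = (K : Set D) := by
  obtain ⟨M, hM⟩ := exists_maximal_commuting_mapsTo σ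
  have hK : (Subfield.centralizer M : Set D) = M :=
    (Subfield.coe_centralizer M).trans (hσ.centralizer_eq_of_maximal hM)
  refine ⟨Subfield.centralizer M, ?_, ?_⟩
  · intro x hx
    rw [← SetLike.mem_coe, hK] at hx ⊢
    exact hM.prop.2 hx
  · rw [hK]
    exact hK

/-- Every finite-dimensional central division algebra with involution contains a
maximal (i.e. self-centralizing) subfield which is invariant under the involution. -/
theorem stmt_11 {F D : Type*} [Field F] [DivisionRing D] [Algebra F D]
    [Algebra.IsCentral F D] [FiniteDimensional F D]
    (σ : D → D) (hσ : IsInvolution σ) :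
    ∃ K : Subfield D, (∀ x ∈ K, σ x ∈ K) ∧
      Set.centralizer (K : Set D) = (K : Set D) :=
  stmt_11_general σ hσ
end

section
/- Let R = C⟨x,y⟩/(yx - εxy) with ε a primitive cube root of unity, with involution fixing x, y and conjugating complex coefficients. For any monomial ordering, if d ∈ R has leading term c·x^m y^n, then d·d* has leading term c·c̄·ε^{2mn}·x^{2m}y^{2n}; consequently R is formally real. -/
open Finset

lemma qeps_ne_zero : ((-1 : ℂ) + Complex.I * (Real.sqrt 3 : ℂ)) / 2 ≠ 0 := by
  intro h
  rw [div_eq_zero_iff] at h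
  rcases h with h | h
  · have := congrArg Complex.re h
    simp [Complex.add_re, Complex.mul_re] at this
  · norm_num at h

lemma exists_max_lt (lt : ℕ×ℕ → ℕ×ℕ → Prop)
    (htrans : ∀ p q r, lt p q → lt q r → lt p r)
    (htot : ∀ p q, p ≠ q → lt p q ∨ lt q p)
    (s : Finset (ℕ×ℕ)) (hs : s.Nonempty) :
    ∃ M ∈ s, ∀ q ∈ s, q ≠ M → lt q M := by
  classical
  induction s using Finset.induction_on with
  | empty => exact absurd hs (by simp)
  | @insert a s ha ih =>
    rcases s.eq_empty_or_nonempty with h | h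
    · subst h
      exact ⟨a, by simp, by simp⟩
    · obtain ⟨M, hM, hmax⟩ := ih h
      have haM : a ≠ M := fun h => ha (h ▸ hM)
      rcases htot a M haM with h1 | h1
      · refine ⟨M, Finset.mem_insert_of_mem hM, ?_⟩
        intro q hq hqM
        rcases Finset.mem_insert.1 hq with rfl | hq
        · exact h1
        · exact hmax q hq hqM
      · refine ⟨a, Finset.mem_insert_self a s, ?_⟩
        intro q hq hqa
        rcases Finset.mem_insert.1 hq with rfl | hq
        · exact absurd rfl hqa
        · by_cases hqM : q = M
          · exact hqM ▸ h1
          · exact htrans q M a (hmax q hq hqM) h1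

section Aux
variable {R : Type*} [Ring R] [Algebra ℂ R] (x y : R) (ε : ℂ)

lemma aux_yx_pow (hyx : y * x = ε • (x * y)) (m : ℕ) :
    y * x ^ m = (ε ^ m) • (x ^ m * y) := by
  induction m with
  | zero => simp
  | succ m ih =>
    rw [pow_succ, ← mul_assoc, ih, smul_mul_assoc, mul_assoc, hyx,
      mul_smul_comm, smul_smul, ← pow_succ, mul_assoc]

lemma aux_ypow_xpow (hyx : y * x = ε • (x * y)) (m n : ℕ) :
    y ^ n * x ^ m = (ε ^ (m * n)) • (x ^ m * y ^ n) := by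
  induction n with
  | zero => simp
  | succ n ih =>
    rw [pow_succ, mul_assoc, aux_yx_pow x y ε hyx, mul_smul_comm, ← mul_assoc, ih,
      smul_mul_assoc, smul_smul, ← pow_add, mul_assoc, ← pow_succ]
    ring_nf

lemma aux_mono_mul (hyx : y * x = ε • (x * y)) (a b c d : ℕ) :
    (x ^ a * y ^ b) * (x ^ c * y ^ d) =
      (ε ^ (c * b)) • (x ^ (a + c) * y ^ (b + d)) := by
  rw [mul_assoc, ← mul_assoc (y ^ b), aux_ypow_xpow x y ε hyx, smul_mul_assoc,
    mul_smul_comm, mul_assoc, ← pow_add, ← mul_assoc, ← pow_add]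

variable (invo : R → R)

lemma invo_one' (hinvo : IsInvolution invo) : invo 1 = 1 := by
  obtain ⟨hadd, hmul, hinv⟩ := hinvo
  have h2 : invo (invo 1) = invo 1 * invo (invo 1) := by
    conv_lhs => rw [← mul_one (invo 1), hmul]
  rw [hinv] at h2
  rw [mul_one] at h2
  exact h2.symm

lemma invo_smul' (hinvo : IsInvolution invo)
    (hiC : ∀ z : ℂ, invo (algebraMap ℂ R z) = algebraMap ℂ R (starRingEnd ℂ z))
    (z : ℂ) (r : R) : invo (z • r) = (starRingEnd ℂ z) • invo r := by
  obtain ⟨hadd, hmul, hinv⟩ := hinvo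
  rw [Algebra.smul_def, hmul, hiC, ← Algebra.commutes, ← Algebra.smul_def]

lemma invo_pow' (hinvo : IsInvolution invo) (v : R) (hv : invo v = v) (a : ℕ) :
    invo (v ^ a) = v ^ a := by
  obtain ⟨hadd, hmul, hinv⟩ := hinvo
  induction a with
  | zero => simpa using invo_one' invo ⟨hadd, hmul, hinv⟩
  | succ a ih =>
    rw [pow_succ, hmul, hv, ih]
    rw [← pow_succ', pow_succ]

end Aux

/-- Let `R = ℂ⟨x,y⟩/(yx - εxy)` be the quantum plane, `ε = (-1+i√3)/2`, with the
involution fixing `x`, `y` and conjugating complex scalars.  For any monomial ordering,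
if `d` has leading term `c·xᵐyⁿ` then `d·d*` has leading term `c c̄ ε^{2mn} x^{2m}y^{2n}`;
consequently `R` is formally real. -/
theorem stmt_18 {R : Type*} [Ring R] [Algebra ℂ R] (x y : R)
    (hyx : y * x = algebraMap ℂ R ((-1 + Complex.I * (Real.sqrt 3 : ℂ)) / 2) * (x * y))
    (invo : R → R) (hinvo : IsInvolution invo)
    (hix : invo x = x) (hiy : invo y = y)
    (hiC : ∀ z : ℂ, invo (algebraMap ℂ R z) = algebraMap ℂ R (starRingEnd ℂ z))
    (coeff : R → ((ℕ × ℕ) →₀ ℂ))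
    (hrepr : ∀ r : R, r = ∑ p ∈ (coeff r).support, coeff r p • (x ^ p.1 * y ^ p.2))
    (huniq : ∀ (r : R) (c : (ℕ × ℕ) →₀ ℂ),
      (∑ p ∈ c.support, c p • (x ^ p.1 * y ^ p.2)) = r → c = coeff r)
    (lt : ℕ × ℕ → ℕ × ℕ → Prop)
    (htrans : ∀ p q r, lt p q → lt q r → lt p r)
    (hirr : ∀ p, ¬ lt p p)
    (htot : ∀ p q, p ≠ q → lt p q ∨ lt q p)
    (hcompat : ∀ p q r, lt p q → lt (p + r) (q + r)) :
    (∀ d : R, d ≠ 0 → ∀ m n : ℕ,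
      ((m, n) ∈ (coeff d).support ∧
        ∀ q ∈ (coeff d).support, q ≠ (m, n) → lt q (m, n)) →
      (2 * m, 2 * n) ∈ (coeff (d * invo d)).support ∧
      coeff (d * invo d) (2 * m, 2 * n) =
        coeff d (m, n) * starRingEnd ℂ (coeff d (m, n)) *
          ((-1 + Complex.I * (Real.sqrt 3 : ℂ)) / 2) ^ (2 * m * n) ∧
      (∀ q ∈ (coeff (d * invo d)).support, q ≠ (2 * m, 2 * n) → lt q (2 * m, 2 * n))) ∧
    (∀ (k : ℕ) (r : Fin k → R), 0 < k → (∀ i, r i ≠ 0) →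
      (∑ i, r i * invo (r i)) ≠ 0) := by
  classical
  obtain ⟨hadd, hmul, hinv⟩ := hinvo
  set ε : ℂ := (-1 + Complex.I * (Real.sqrt 3 : ℂ)) / 2 with hε
  have hεne : ε ≠ 0 := qeps_ne_zero
  have hyx' : y * x = ε • (x * y) := by rw [hyx, ← Algebra.smul_def]
  set mono : ℕ × ℕ → R := fun p => x ^ p.1 * y ^ p.2 with hmono
  set T : ((ℕ × ℕ) →₀ ℂ) → R := fun c => ∑ p ∈ c.support, c p • mono p with hT
  have hTdef : ∀ c : (ℕ × ℕ) →₀ ℂ, T c = c.sum fun p a => a • mono p := fun c => rfl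
  have hTrepr : ∀ r : R, T (coeff r) = r := fun r => (hrepr r).symm
  have huniq' : ∀ (r : R) (c : (ℕ × ℕ) →₀ ℂ), T c = r → c = coeff r := huniq
  have hTadd : ∀ a b : (ℕ × ℕ) →₀ ℂ, T (a + b) = T a + T b := by
    intro a b
    rw [hTdef, hTdef, hTdef]
    exact Finsupp.sum_add_index' (fun p => zero_smul ℂ (mono p))
      (fun p a b => add_smul a b (mono p))
  have hTsum : ∀ {ι : Type} (s : Finset ι) (f : ι → ((ℕ × ℕ) →₀ ℂ)),
      T (∑ i ∈ s, f i) = ∑ i ∈ s, T (f i) := by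
    intro ι s f
    exact map_sum (AddMonoidHom.mk' T hTadd) f s
  have hTsingle : ∀ (u : ℕ × ℕ) (a : ℂ), T (Finsupp.single u a) = a • mono u := by
    intro u a
    rw [hTdef]
    exact Finsupp.sum_single_index (zero_smul ℂ (mono u))
  have hT0 : T 0 = 0 := by rw [hTdef]; simp
  have hcoeff0 : coeff 0 = (0 : (ℕ × ℕ) →₀ ℂ) := (huniq' 0 0 hT0).symm
  have hinvo_mono : ∀ p : ℕ × ℕ, invo (mono p) = (ε ^ (p.1 * p.2)) • mono p := by
    intro p
    rw [hmono]
    simp only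
    rw [hmul, invo_pow' invo ⟨hadd, hmul, hinv⟩ y hiy, invo_pow' invo ⟨hadd, hmul, hinv⟩ x hix]
    exact aux_ypow_xpow x y ε hyx' p.1 p.2
  have hinvo_sum : ∀ {ι : Type} (s : Finset ι) (f : ι → R),
      invo (∑ i ∈ s, f i) = ∑ i ∈ s, invo (f i) := by
    intro ι s f
    exact map_sum (AddMonoidHom.mk' invo hadd) f s
  -- order helper lemmas
  have hlt_add : ∀ p q P : ℕ × ℕ, lt p P → (q = P ∨ lt q P) → lt (p + q) (P + P) := by
    intro p q P h1 h2
    have h3 : lt (p + q) (P + q) := hcompat p P q h1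
    rcases h2 with rfl | h2
    · exact h3
    · have h4 : lt (P + q) (P + P) := by
        have := hcompat q P P h2
        rwa [add_comm q P] at this
      exact htrans _ _ _ h3 h4
  have hkey2 : ∀ p q P : ℕ × ℕ, (p = P ∨ lt p P) → (q = P ∨ lt q P) →
      ¬(p = P ∧ q = P) → lt (p + q) (P + P) := by
    intro p q P hp hq hne
    rcases hp with rfl | hp
    · rcases hq with rfl | hq
      · exact absurd ⟨rfl, rfl⟩ hne
      · have := hcompat q p p hq
        rwa [add_comm q p] at this
    · exact hlt_add p q P hp hq
  -- main per-element lemma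
  have main : ∀ d : R, ∀ m n : ℕ,
      ((m, n) ∈ (coeff d).support ∧
        ∀ q ∈ (coeff d).support, q ≠ (m, n) → lt q (m, n)) →
      (2 * m, 2 * n) ∈ (coeff (d * invo d)).support ∧
      coeff (d * invo d) (2 * m, 2 * n) =
        coeff d (m, n) * starRingEnd ℂ (coeff d (m, n)) * ε ^ (2 * m * n) ∧
      (∀ q ∈ (coeff (d * invo d)).support, q ≠ (2 * m, 2 * n) → lt q (2 * m, 2 * n)) := by
    intro d m n hlead0
    obtain ⟨hmem, hlead⟩ := hlead0
    set c : (ℕ × ℕ) →₀ ℂ := coeff d with hc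
    set s : Finset (ℕ × ℕ) := c.support with hs
    set W : ℕ × ℕ → ℕ × ℕ → ℂ :=
      fun p q => c p * starRingEnd ℂ (c q) * ε ^ (q.1 * q.2 + p.2 * q.1) with hWdef
    set F : (ℕ × ℕ) →₀ ℂ := ∑ p ∈ s, ∑ q ∈ s, Finsupp.single (p + q) (W p q) with hFdef
    have hinvoTc : invo d = ∑ q ∈ s, (starRingEnd ℂ (c q) * ε ^ (q.1 * q.2)) • mono q := by
      conv_lhs => rw [← hTrepr d]
      rw [hT]
      simp only
      rw [hinvo_sum]
      refine Finset.sum_congr rfl fun q hq => ?_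
      rw [invo_smul' invo ⟨hadd, hmul, hinv⟩ hiC, hinvo_mono, smul_smul]
    have hTF : T F = d * invo d := by
      have lhs_eq : T F = ∑ p ∈ s, ∑ q ∈ s, W p q • mono (p + q) := by
        rw [hFdef, hTsum]
        refine Finset.sum_congr rfl fun p _ => ?_
        rw [hTsum]
        exact Finset.sum_congr rfl fun q _ => hTsingle _ _
      have hd : d = ∑ p ∈ s, c p • mono p := (hTrepr d).symm
      rw [lhs_eq, hinvoTc, hd]
      rw [Finset.sum_mul_sum]
      refine Finset.sum_congr rfl fun p hp => Finset.sum_congr rfl fun q hq => ?_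
      rw [smul_mul_smul_comm]
      have hmm : mono p * mono q = (ε ^ (q.1 * p.2)) • mono (p + q) := by
        rw [hmono]
        simp only
        rw [aux_mono_mul x y ε hyx']
        rfl
      rw [hmm, smul_smul, hWdef]
      simp only
      rw [pow_add]
      ring_nf
    have hcF : coeff (d * invo d) = F := (huniq' _ F hTF).symm
    have hFeval : ∀ u : ℕ × ℕ,
        F u = ∑ p ∈ s, ∑ q ∈ s, if p + q = u then W p q else 0 := by
      intro u
      rw [hFdef, Finset.sum_apply']
      refine Finset.sum_congr rfl fun p hp => ?_
      rw [Finset.sum_apply']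
      exact Finset.sum_congr rfl fun q hq => Finsupp.single_apply
    set L : ℕ × ℕ := (m, n) with hL
    have hLL : L + L = (2 * m, 2 * n) := by
      rw [hL, Prod.mk_add_mk, two_mul, two_mul]
    have hmemle : ∀ p ∈ s, p = L ∨ lt p L := by
      intro p hp
      by_cases h : p = L
      · exact Or.inl h
      · exact Or.inr (hlead p hp h)
    have hsum_ne : ∀ p ∈ s, ∀ q ∈ s, p + q = L + L → p = L ∧ q = L := by
      intro p hp q hq hpq
      by_contra hcon
      have := hkey2 p q L (hmemle p hp) (hmemle q hq) (by tauto)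
      rw [hpq] at this
      exact hirr _ this
    have hFLL : F (L + L) = W L L := by
      rw [hFeval]
      rw [Finset.sum_eq_single_of_mem L hmem
        (fun p hp hpL => Finset.sum_eq_zero fun q hq =>
          if_neg (fun h => hpL (hsum_ne p hp q hq h).1))]
      rw [Finset.sum_eq_single_of_mem L hmem
        (fun q hq hqL => if_neg (fun h => hqL (hsum_ne L hmem q hq h).2))]
      rw [if_pos rfl]
    have hWLL : W L L = c L * starRingEnd ℂ (c L) * ε ^ (2 * m * n) := by
      rw [hWdef]
      simp only [hL]
      rw [show m * n + n * m = 2 * m * n by ring]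
    have hcLne : c L ≠ 0 := Finsupp.mem_support_iff.1 hmem
    have hWne : W L L ≠ 0 := by
      rw [hWLL]
      exact mul_ne_zero (mul_ne_zero hcLne (by simpa using hcLne)) (pow_ne_zero _ hεne)
    refine ⟨?_, ?_, ?_⟩
    · rw [hcF, ← hLL, Finsupp.mem_support_iff, hFLL]
      exact hWne
    · rw [hcF, ← hLL, hFLL, hWLL]
    · intro u hu huneq
      rw [hcF] at hu
      have hFu : F u ≠ 0 := Finsupp.mem_support_iff.1 hu
      have hex : ∃ p ∈ s, ∃ q ∈ s, p + q = u := by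
        by_contra hcon
        push_neg at hcon
        apply hFu
        rw [hFeval]
        exact Finset.sum_eq_zero fun p hp => Finset.sum_eq_zero fun q hq =>
          if_neg (hcon p hp q hq)
      obtain ⟨p, hp, q, hq, rfl⟩ := hex
      rw [← hLL]
      exact hkey2 p q L (hmemle p hp) (hmemle q hq)
        (fun h => huneq (by rw [h.1, h.2, hLL]))
  refine ⟨fun d _ m n h => main d m n h, ?_⟩
  -- formal reality
  intro k r hk hr
  have hsupp_ne : ∀ i, ((coeff (r i)).support).Nonempty := by
    intro i
    rw [Finset.nonempty_iff_ne_empty]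
    intro h
    apply hr i
    have : coeff (r i) = 0 := Finsupp.support_eq_empty.1 h
    have := hTrepr (r i)
    rw [‹coeff (r i) = 0›, hT0] at this
    exact this.symm
  have hp : ∀ i, ∃ P : ℕ × ℕ, P ∈ (coeff (r i)).support ∧
      ∀ q ∈ (coeff (r i)).support, q ≠ P → lt q P := fun i =>
    exists_max_lt lt htrans htot _ (hsupp_ne i)
  choose P hPmem hPmax using hp
  set D : Fin k → ℕ × ℕ := fun i => (2 * (P i).1, 2 * (P i).2) with hD
  have hmain : ∀ i,
      D i ∈ (coeff (r i * invo (r i))).support ∧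
      coeff (r i * invo (r i)) (D i) =
        coeff (r i) (P i) * starRingEnd ℂ (coeff (r i) (P i)) *
          ε ^ (2 * (P i).1 * (P i).2) ∧
      (∀ q ∈ (coeff (r i * invo (r i))).support, q ≠ D i → lt q (D i)) := by
    intro i
    have := main (r i) (P i).1 (P i).2 (by rw [Prod.mk.eta]; exact ⟨hPmem i, hPmax i⟩)
    rw [Prod.mk.eta] at this
    exact this
  have hne : ((Finset.univ.image D : Finset (ℕ × ℕ))).Nonempty :=
    ⟨D ⟨0, hk⟩, Finset.mem_image_of_mem _ (Finset.mem_univ _)⟩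
  obtain ⟨M, hMmem, hMmax⟩ := exists_max_lt lt htrans htot _ hne
  obtain ⟨i0, -, hi0⟩ := Finset.mem_image.1 hMmem
  have hsum : coeff (∑ i, r i * invo (r i)) = ∑ i, coeff (r i * invo (r i)) := by
    refine (huniq' _ _ ?_).symm
    rw [hTsum]
    exact Finset.sum_congr rfl fun i _ => hTrepr _
  suffices hcne : coeff (∑ i, r i * invo (r i)) M ≠ 0 by
    intro h0
    apply hcne
    rw [h0, hcoeff0]
    simp
  rw [hsum, Finset.sum_apply']
  have hzero : ∀ i, D i ≠ M → coeff (r i * invo (r i)) M = 0 := by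
    intro i hiM
    by_contra h
    have hMsup : M ∈ (coeff (r i * invo (r i))).support := Finsupp.mem_support_iff.2 h
    have h1 : lt M (D i) := (hmain i).2.2 M hMsup (Ne.symm hiM)
    have h2 : lt (D i) M :=
      hMmax (D i) (Finset.mem_image_of_mem D (Finset.mem_univ i)) hiM
    exact hirr M (htrans _ _ _ h1 h2)
  have hPeq : ∀ i, D i = M → P i = P i0 := by
    intro i hiM
    have hDD : D i = D i0 := hiM.trans hi0.symm
    rw [hD] at hDD
    simp only [Prod.mk.injEq] at hDD
    exact Prod.ext (by omega) (by omega)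
  have hval : ∀ i, D i = M → coeff (r i * invo (r i)) M =
      (coeff (r i) (P i) * starRingEnd ℂ (coeff (r i) (P i))) *
        ε ^ (2 * (P i0).1 * (P i0).2) := by
    intro i hiM
    rw [← hiM, (hmain i).2.1, hPeq i hiM]
  rw [← Finset.sum_filter_add_sum_filter_not Finset.univ (fun i => D i = M)]
  rw [Finset.sum_eq_zero (fun i hi => hzero i (Finset.mem_filter.1 hi).2), add_zero]
  rw [Finset.sum_congr rfl (fun i hi => hval i (Finset.mem_filter.1 hi).2)]
  rw [← Finset.sum_mul]
  refine mul_ne_zero ?_ (pow_ne_zero _ hεne)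
  have hcast : ∀ i : Fin k, coeff (r i) (P i) * starRingEnd ℂ (coeff (r i) (P i)) =
      ((Complex.normSq (coeff (r i) (P i)) : ℝ) : ℂ) := by
    intro i
    rw [Complex.mul_conj]
  rw [Finset.sum_congr rfl fun i _ => hcast i, ← Complex.ofReal_sum]
  rw [Complex.ofReal_ne_zero]
  have hi0mem : i0 ∈ Finset.univ.filter (fun i => D i = M) :=
    Finset.mem_filter.2 ⟨Finset.mem_univ _, hi0⟩
  refine ne_of_gt (Finset.sum_pos' (fun i _ => Complex.normSq_nonneg _) ⟨i0, hi0mem, ?_⟩)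
  exact Complex.normSq_pos.2 (Finsupp.mem_support_iff.1 (hPmem i0))
end
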